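/- arXiv:2411.14629 — 11 statements merged into one kernel-verified Lean document; each statement's English description precedes it below -/
import Mathlib

section
/- Let R be a (not necessarily commutative) ring and let A, B, R₀, S be matrices over R (A square n×n, B square m×m, R₀ of size n×m, S of size m×n) satisfying the shift equivalence equations A^ℓ = R₀S, B^ℓ = SR₀, AR₀ = R₀B, SA = BS for some positive integer ℓ. Then over the polynomial ring R[t], the following block matrix identity holds: [[1-tA, -R₀],[0, 1]] · [[1 + tA + ⋯ + (tA)^(ℓ-1), R₀],[-t^ℓ S, 1-tB]] = [[1, 0],[-t^ℓ S, 1-tB]]. -/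
/-!
Write `T = tA`, `P = R₀`, `Q = t^ℓ S`, `U = tB`. The identity only needs `T^ℓ = P Q` and
`T P = P U`: the top-left block is `(1 - T)(1 + ⋯ + T^(ℓ-1)) + P Q = 1 - T^ℓ + T^ℓ` and the
top-right block is `(1 - T) P - P (1 - U) = P U - T P`. Both relations follow from
`A^ℓ = R₀ S` and `A R₀ = R₀ B` because `t` is central in `R[t]`, even for noncommutative `R`.
-/

open Polynomial Matrix

namespace Matrix

variable {l m n α : Type*} [Ring α]

theorem mul_smul_of_forall_commute [Fintype l] [Fintype m] [DecidableEq l] [DecidableEq m] {r : α}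
    (hr : ∀ a, Commute r a) (M : Matrix l m α) (N : Matrix m n α) :
    M * (r • N) = r • (M * N) := by
  rw [smul_eq_diagonal_mul, smul_eq_diagonal_mul, ← Matrix.mul_assoc, ← Matrix.mul_assoc]
  exact congrArg (· * N) (scalar_comm r hr M).symm

theorem smul_pow_of_forall_commute [Fintype n] [DecidableEq n] {r : α}
    (hr : ∀ a, Commute r a) (M : Matrix n n α) (k : ℕ) :
    (r • M) ^ k = r ^ k • M ^ k := by
  induction k with
  | zero => simp
  | succ k ih =>
    rw [pow_succ, ih, smul_mul, mul_smul_of_forall_commute hr, smul_smul, ← pow_succ,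
      ← pow_succ]

theorem fromBlocks_one_sub_mul_geom_sum [Fintype m] [Fintype n] [DecidableEq m] [DecidableEq n]
    {ℓ : ℕ} {T : Matrix n n α} {P : Matrix n m α} {Q : Matrix m n α} {U : Matrix m m α}
    (hT : T ^ ℓ = P * Q) (hP : T * P = P * U) :
    fromBlocks (1 - T) (-P) 0 1 * fromBlocks (∑ i ∈ Finset.range ℓ, T ^ i) P (-Q) (1 - U) =
      fromBlocks 1 0 (-Q) (1 - U) := by
  have top_left : (1 - T) * ∑ i ∈ Finset.range ℓ, T ^ i + -P * -Q = 1 := by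
    rw [mul_neg_geom_sum, Matrix.neg_mul, Matrix.mul_neg, neg_neg, ← hT, sub_add_cancel]
  have top_right : (1 - T) * P + -P * (1 - U) = 0 := by
    rw [Matrix.sub_mul, Matrix.neg_mul, Matrix.mul_sub, hP]
    simp
  rw [fromBlocks_multiply, top_left, top_right]
  simp

end Matrix

theorem pse_block_identity_general (R : Type*) [Ring R] (n m ℓ : ℕ)
    (A : Matrix (Fin n) (Fin n) R) (B : Matrix (Fin m) (Fin m) R)
    (R₀ : Matrix (Fin n) (Fin m) R) (S : Matrix (Fin m) (Fin n) R)
    (h1 : A ^ ℓ = R₀ * S)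
    (h3 : A * R₀ = R₀ * B) :
    let tA : Matrix (Fin n) (Fin n) (Polynomial R) :=
      (X : Polynomial R) • A.map Polynomial.C
    let tB : Matrix (Fin m) (Fin m) (Polynomial R) :=
      (X : Polynomial R) • B.map Polynomial.C
    let R₀' : Matrix (Fin n) (Fin m) (Polynomial R) := R₀.map Polynomial.C
    let S' : Matrix (Fin m) (Fin n) (Polynomial R) := S.map Polynomial.C
    Matrix.fromBlocks (1 - tA) (-R₀') 0 1 *
      Matrix.fromBlocks (∑ i ∈ Finset.range ℓ, tA ^ i) R₀'
        (-((X : Polynomial R) ^ ℓ • S')) (1 - tB) =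
    Matrix.fromBlocks 1 0 (-((X : Polynomial R) ^ ℓ • S')) (1 - tB) := by
  intro tA tB R₀' S'
  have hX : ∀ p : R[X], Commute (X : R[X]) p := commute_X
  have hT : tA ^ ℓ = R₀' * ((X : R[X]) ^ ℓ • S') := by
    rw [smul_pow_of_forall_commute hX, mul_smul_of_forall_commute fun p => (hX p).pow_left ℓ,
      ← Matrix.map_pow, h1, Matrix.map_mul]
  have hP : tA * R₀' = R₀' * tB := by
    rw [smul_mul, mul_smul_of_forall_commute hX, ← Matrix.map_mul, ← Matrix.map_mul, h3]
  exact fromBlocks_one_sub_mul_geom_sum hT hP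

/-- the basic block-matrix identity derived from a lag-ℓ shift
equivalence over a (not necessarily commutative) ring `R`, viewed over `R[t]`. -/
theorem pse_block_identity (R : Type*) [Ring R] (n m ℓ : ℕ) (hℓ : 0 < ℓ)
    (A : Matrix (Fin n) (Fin n) R) (B : Matrix (Fin m) (Fin m) R)
    (R₀ : Matrix (Fin n) (Fin m) R) (S : Matrix (Fin m) (Fin n) R)
    (h1 : A ^ ℓ = R₀ * S) (h2 : B ^ ℓ = S * R₀)
    (h3 : A * R₀ = R₀ * B) (h4 : S * A = B * S) :
    let tA : Matrix (Fin n) (Fin n) (Polynomial R) :=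
      (X : Polynomial R) • A.map Polynomial.C
    let tB : Matrix (Fin m) (Fin m) (Polynomial R) :=
      (X : Polynomial R) • B.map Polynomial.C
    let R₀' : Matrix (Fin n) (Fin m) (Polynomial R) := R₀.map Polynomial.C
    let S' : Matrix (Fin m) (Fin n) (Polynomial R) := S.map Polynomial.C
    Matrix.fromBlocks (1 - tA) (-R₀') 0 1 *
      Matrix.fromBlocks (∑ i ∈ Finset.range ℓ, tA ^ i) R₀'
        (-((X : Polynomial R) ^ ℓ • S')) (1 - tB) =
    Matrix.fromBlocks 1 0 (-((X : Polynomial R) ^ ℓ • S')) (1 - tB) :=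
  pse_block_identity_general R n m ℓ A B R₀ S h1 h3
end

section
/- Let R be a ring and let A, B, R₀, S give a lag-ℓ shift equivalence between square matrices A and B over R. Then the PSE (polynomial shift equivalence) equation holds over R[t]: [[1, 0],[t^ℓ S, 1]] · [[1, -R₀],[0, 1]] · [[1-tA, 0],[0, 1]] · [[1 + tA + ⋯ + (tA)^(ℓ-1), R₀],[-t^ℓ S, 1-tB]] = [[1, 0],[0, 1-tB]]. -/
/-!
Substituting `a = tA`, `b = tB`, `r = R₀`, `s = t^ℓ S` turns the data into a lag-`ℓ` shift
equivalence over `R[t]`, because `t` is central. The identity then holds over any ring as soon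
as `a ^ ℓ = r * s` and `a * r = r * b`: the first three factors multiply to
`[[1 - a, -r], [s (1 - a), 1 - s r]]`, and against the last factor the telescoping sum
`(1 - a) ∑ aⁱ = 1 - a^ℓ = 1 - r s` kills the off-diagonal blocks and normalises the diagonal ones.
-/

open Polynomial Matrix

namespace Matrix

variable {α : Type*} [Ring α] {l m n : Type*}

theorem mul_smul_of_commute [Fintype m] {c : α} (hc : ∀ a, Commute c a)
    (M : Matrix l m α) (N : Matrix m n α) : M * (c • N) = c • (M * N) := by
  ext i j
  simp only [mul_apply, smul_apply, smul_eq_mul, Finset.mul_sum]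
  exact Finset.sum_congr rfl fun k _ => (hc (M i k)).symm.left_comm _

theorem smul_pow_of_commute [Fintype n] [DecidableEq n] {c : α} (hc : ∀ a, Commute c a)
    (M : Matrix n n α) (k : ℕ) : (c • M) ^ k = c ^ k • M ^ k := by
  induction k with
  | zero => simp
  | succ k ih =>
    rw [pow_succ, ih, smul_mul, mul_smul_of_commute hc, smul_smul, ← pow_succ, ← pow_succ]

variable [Fintype m] [Fintype n] [DecidableEq m] [DecidableEq n]

theorem fromBlocks_pse_identity (ℓ : ℕ) (a : Matrix n n α) (b : Matrix m m α)
    (r : Matrix n m α) (s : Matrix m n α) (hpow : a ^ ℓ = r * s) (hcomm : a * r = r * b) :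
    fromBlocks 1 0 s 1 * fromBlocks 1 (-r) 0 1 * fromBlocks (1 - a) 0 0 1 *
      fromBlocks (∑ i ∈ Finset.range ℓ, a ^ i) r (-s) (1 - b) = fromBlocks 1 0 0 (1 - b) := by
  have hgeom : (1 - a) * ∑ i ∈ Finset.range ℓ, a ^ i = 1 - r * s := by
    rw [mul_neg_geom_sum, hpow]
  simp only [fromBlocks_multiply, Matrix.one_mul, Matrix.mul_one, Matrix.mul_zero, add_zero, zero_add,
    Matrix.neg_mul, Matrix.mul_neg, neg_neg]
  congr 1
  · rw [hgeom, sub_add_cancel]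
  · rw [Matrix.sub_mul, Matrix.mul_sub, Matrix.one_mul, Matrix.mul_one, hcomm]; abel
  · rw [Matrix.mul_assoc, hgeom]
    simp only [Matrix.mul_sub, Matrix.add_mul, Matrix.neg_mul, Matrix.mul_one, Matrix.one_mul,
      Matrix.mul_assoc]
    abel
  · simp only [Matrix.mul_sub, Matrix.sub_mul, Matrix.add_mul, Matrix.neg_mul, Matrix.one_mul,
      Matrix.mul_one, Matrix.mul_assoc, hcomm]
    abel

end Matrix

theorem pse_equation_general (R : Type*) [Ring R] (n m ℓ : ℕ)
    (A : Matrix (Fin n) (Fin n) R) (B : Matrix (Fin m) (Fin m) R)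
    (R₀ : Matrix (Fin n) (Fin m) R) (S : Matrix (Fin m) (Fin n) R)
    (h1 : A ^ ℓ = R₀ * S) (h3 : A * R₀ = R₀ * B) :
    let tA : Matrix (Fin n) (Fin n) (Polynomial R) :=
      (X : Polynomial R) • A.map Polynomial.C
    let tB : Matrix (Fin m) (Fin m) (Polynomial R) :=
      (X : Polynomial R) • B.map Polynomial.C
    let R₀' : Matrix (Fin n) (Fin m) (Polynomial R) := R₀.map Polynomial.C
    let S' : Matrix (Fin m) (Fin n) (Polynomial R) := S.map Polynomial.C
    Matrix.fromBlocks 1 0 ((X : Polynomial R) ^ ℓ • S') 1 *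
      Matrix.fromBlocks 1 (-R₀') 0 1 *
      Matrix.fromBlocks (1 - tA) 0 0 1 *
      Matrix.fromBlocks (∑ i ∈ Finset.range ℓ, tA ^ i) R₀'
        (-((X : Polynomial R) ^ ℓ • S')) (1 - tB) =
    Matrix.fromBlocks 1 0 0 (1 - tB) := by
  intro tA tB R₀' S'
  apply fromBlocks_pse_identity
  · rw [mul_smul_of_commute (commute_X_pow · ℓ), smul_pow_of_commute commute_X, ← Matrix.map_pow,
      h1, Matrix.map_mul]
  · rw [smul_mul, mul_smul_of_commute commute_X, ← Matrix.map_mul, h3, Matrix.map_mul]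

/-- the PSE (polynomial shift equivalence) equation over `R[t]`
derived from a lag-ℓ shift equivalence over the ring `R`. -/
theorem pse_equation (R : Type*) [Ring R] (n m ℓ : ℕ) (hℓ : 0 < ℓ)
    (A : Matrix (Fin n) (Fin n) R) (B : Matrix (Fin m) (Fin m) R)
    (R₀ : Matrix (Fin n) (Fin m) R) (S : Matrix (Fin m) (Fin n) R)
    (h1 : A ^ ℓ = R₀ * S) (h2 : B ^ ℓ = S * R₀)
    (h3 : A * R₀ = R₀ * B) (h4 : S * A = B * S) :
    let tA : Matrix (Fin n) (Fin n) (Polynomial R) :=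
      (X : Polynomial R) • A.map Polynomial.C
    let tB : Matrix (Fin m) (Fin m) (Polynomial R) :=
      (X : Polynomial R) • B.map Polynomial.C
    let R₀' : Matrix (Fin n) (Fin m) (Polynomial R) := R₀.map Polynomial.C
    let S' : Matrix (Fin m) (Fin n) (Polynomial R) := S.map Polynomial.C
    Matrix.fromBlocks 1 0 ((X : Polynomial R) ^ ℓ • S') 1 *
      Matrix.fromBlocks 1 (-R₀') 0 1 *
      Matrix.fromBlocks (1 - tA) 0 0 1 *
      Matrix.fromBlocks (∑ i ∈ Finset.range ℓ, tA ^ i) R₀'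
        (-((X : Polynomial R) ^ ℓ • S')) (1 - tB) =
    Matrix.fromBlocks 1 0 0 (1 - tB) :=
  pse_equation_general R n m ℓ A B R₀ S h1 h3
end

section
/- Let R be an integral domain and let A, B, R₀, S give a lag-ℓ shift equivalence between square matrices A and B over R. Then the matrix U = [[1 + tA + ⋯ + (tA)^(ℓ-1), R₀],[-t^ℓ S, 1-tB]] over R[t] has determinant 1. -/
/-!
Write `U` for the block matrix and `V = [[1 - tA, 0], [t^ℓ S, 1]]`. The geometric sum gives
`(1 + ⋯ + (tA)^(ℓ-1)) (1 - tA) = 1 - t^ℓ R₀ S`, and `SA = BS` makes the lower left block vanish,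
so `U V = [[1, R₀], [0, 1 - tB]]` and `det U · det(1 - tA) = det(1 - tB)`. The shift equivalence
is symmetric, so the same argument with the roles of `(A, R₀)` and `(B, S)` exchanged gives
`det U' · det(1 - tB) = det(1 - tA)`. Both `det(1 - tA)` and `det(1 - tB)` take the value `1` at
`t = 0`, so `det U` is a unit of `R[t]`, hence a constant, and that constant is `1`.
-/

open Polynomial Matrix

namespace Matrix

variable {K : Type*} [CommRing K] {n m : Type*} [Fintype n] [Fintype m]
  [DecidableEq n] [DecidableEq m]

def shiftIntertwiner (x : K) (ℓ : ℕ) (A : Matrix n n K) (B : Matrix m m K)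
    (R₀ : Matrix n m K) (S : Matrix m n K) : Matrix (n ⊕ m) (n ⊕ m) K :=
  fromBlocks (∑ i ∈ Finset.range ℓ, (x • A) ^ i) R₀ (-(x ^ ℓ • S)) (1 - x • B)

variable {x : K} {ℓ : ℕ} {A : Matrix n n K} {B : Matrix m m K} {R₀ : Matrix n m K}
  {S : Matrix m n K}

theorem shiftIntertwiner_mul_fromBlocks (hA : A ^ ℓ = R₀ * S) (hS : S * A = B * S) :
    shiftIntertwiner x ℓ A B R₀ S * fromBlocks (1 - x • A) 0 (x ^ ℓ • S) 1 =
      fromBlocks 1 R₀ 0 (1 - x • B) := by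
  have upper_left :
      (∑ i ∈ Finset.range ℓ, (x • A) ^ i) * (1 - x • A) + R₀ * (x ^ ℓ • S) = 1 := by
    rw [geom_sum_mul_neg, _root_.smul_pow, hA, Matrix.mul_smul, sub_add_cancel]
  have lower_left : -(x ^ ℓ • S) * (1 - x • A) + (1 - x • B) * (x ^ ℓ • S) = 0 := by
    have commute : x ^ ℓ • S * (x • A) = x • B * (x ^ ℓ • S) := by
      rw [Matrix.smul_mul, Matrix.mul_smul, Matrix.smul_mul, Matrix.mul_smul, hS, smul_comm]
    rw [Matrix.neg_mul, Matrix.mul_sub, Matrix.sub_mul, Matrix.mul_one, Matrix.one_mul, commute]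
    abel
  rw [shiftIntertwiner, fromBlocks_multiply, upper_left, lower_left]
  simp

theorem det_shiftIntertwiner_mul (hA : A ^ ℓ = R₀ * S) (hS : S * A = B * S) :
    (shiftIntertwiner x ℓ A B R₀ S).det * (1 - x • A).det = (1 - x • B).det := by
  simpa [det_fromBlocks_zero₁₂, det_fromBlocks_zero₂₁] using
    congrArg det (shiftIntertwiner_mul_fromBlocks hA hS)

theorem det_shiftIntertwiner_map_mul_charpolyRev (hA : A ^ ℓ = R₀ * S) (hS : S * A = B * S) :
    (shiftIntertwiner X ℓ (A.map C) (B.map C) (R₀.map C) (S.map C)).det * A.charpolyRev =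
      B.charpolyRev :=
  det_shiftIntertwiner_mul (by rw [← Matrix.map_pow, hA, Matrix.map_mul])
    (by rw [← Matrix.map_mul, hS, Matrix.map_mul])

end Matrix

theorem Polynomial.eq_one_of_mul_eq_of_mul_eq {R : Type*} [CommRing R] [IsDomain R]
    {u v p q : R[X]} (hu : u * p = q) (hv : v * q = p) (hp : p.eval 0 = 1) (hq : q.eval 0 = 1) :
    u = 1 := by
  have hp0 : p ≠ 0 := by
    rintro rfl
    simp at hp
  have unit : IsUnit u :=
    IsUnit.of_mul_eq_one v <| mul_right_cancel₀ hp0 <| by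
      rw [mul_right_comm, hu, mul_comm, hv, one_mul]
  obtain ⟨r, -, rfl⟩ := Polynomial.isUnit_iff.mp unit
  have hr : r = 1 := by simpa [hp, hq] using congrArg (eval 0) hu
  rw [hr, C_1]

theorem pse_intertwiner_det_one_general (R : Type*) [CommRing R] [IsDomain R] (n m ℓ : ℕ)
    (A : Matrix (Fin n) (Fin n) R) (B : Matrix (Fin m) (Fin m) R)
    (R₀ : Matrix (Fin n) (Fin m) R) (S : Matrix (Fin m) (Fin n) R)
    (h1 : A ^ ℓ = R₀ * S) (h2 : B ^ ℓ = S * R₀)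
    (h3 : A * R₀ = R₀ * B) (h4 : S * A = B * S) :
    let tA : Matrix (Fin n) (Fin n) (Polynomial R) :=
      (X : Polynomial R) • A.map Polynomial.C
    let tB : Matrix (Fin m) (Fin m) (Polynomial R) :=
      (X : Polynomial R) • B.map Polynomial.C
    let R₀' : Matrix (Fin n) (Fin m) (Polynomial R) := R₀.map Polynomial.C
    let S' : Matrix (Fin m) (Fin n) (Polynomial R) := S.map Polynomial.C
    (Matrix.fromBlocks (∑ i ∈ Finset.range ℓ, tA ^ i) R₀'
        (-((X : Polynomial R) ^ ℓ • S')) (1 - tB)).det = 1 :=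
  eq_one_of_mul_eq_of_mul_eq (det_shiftIntertwiner_map_mul_charpolyRev h1 h4)
    (det_shiftIntertwiner_map_mul_charpolyRev h2 h3.symm) eval_charpolyRev eval_charpolyRev

/-- over an integral domain `R`, the intertwining matrix `U` of the
PSE equation has determinant 1 in `R[t]`. -/
theorem pse_intertwiner_det_one (R : Type*) [CommRing R] [IsDomain R] (n m ℓ : ℕ)
    (hℓ : 0 < ℓ)
    (A : Matrix (Fin n) (Fin n) R) (B : Matrix (Fin m) (Fin m) R)
    (R₀ : Matrix (Fin n) (Fin m) R) (S : Matrix (Fin m) (Fin n) R)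
    (h1 : A ^ ℓ = R₀ * S) (h2 : B ^ ℓ = S * R₀)
    (h3 : A * R₀ = R₀ * B) (h4 : S * A = B * S) :
    let tA : Matrix (Fin n) (Fin n) (Polynomial R) :=
      (X : Polynomial R) • A.map Polynomial.C
    let tB : Matrix (Fin m) (Fin m) (Polynomial R) :=
      (X : Polynomial R) • B.map Polynomial.C
    let R₀' : Matrix (Fin n) (Fin m) (Polynomial R) := R₀.map Polynomial.C
    let S' : Matrix (Fin m) (Fin n) (Polynomial R) := S.map Polynomial.C
    (Matrix.fromBlocks (∑ i ∈ Finset.range ℓ, tA ^ i) R₀'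
        (-((X : Polynomial R) ^ ℓ • S')) (1 - tB)).det = 1 :=
  pse_intertwiner_det_one_general R n m ℓ A B R₀ S h1 h2 h3 h4
end

section
/- If square matrices A and B over Z are shift equivalent over Z (there exist matrices R₀, S over Z and a positive integer ℓ with A^ℓ = R₀S, B^ℓ = SR₀, AR₀ = R₀B, SA = BS), then det(I - t·A) = det(I - t·B) as polynomials in Z[t]. -/
/-!
Write `P = det (1 - tA)`, `Q = det (1 - tB)` and `T_A = ∑ₖ tr (A^(k+1)) tᵏ`. Expanding
`det (1 - (t + s)A) = det (1 - tA) · det (1 - s (1 - tA)⁻¹ A)` to first order in `s` over `ℤ⟦t⟧`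
gives Jacobi's identity `P' = -P T_A`. Since `tr (A^(c+ℓ)) = tr (A^c R₀ S) = tr (S A^c R₀)
= tr (B^(c+ℓ))`, the difference `T_A - T_B` is a polynomial `g`, and `P Q' - P' Q = P Q g`.
The Wronskian on the left has degree below `deg P + deg Q`, so `g = 0`; then `P` and `Q` solve the
same equation `F' = -F T_A` with `F(0) = 1`, hence coincide.
-/

open scoped PowerSeries

namespace PowerSeries

lemma eq_of_derivative_eq_mul {R : Type*} [CommRing R] [IsAddTorsionFree R]
    {f g T : R⟦X⟧} (hf : d⁄dX R f = f * T) (hg : d⁄dX R g = g * T)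
    (hg₀ : IsUnit (constantCoeff g)) (h₀ : constantCoeff f = constantCoeff g) : f = g := by
  obtain ⟨u, rfl⟩ := isUnit_iff_constantCoeff.mpr hg₀
  rw [← Units.mul_inv_eq_one]
  refine derivative.ext ?_ ?_
  · rw [Derivation.leibniz, derivative_inv, hf, hg, derivative_one, smul_eq_mul, smul_eq_mul]
    linear_combination (-(f * ↑u⁻¹ * T)) * Units.inv_mul u
  · rw [map_mul, h₀, ← map_mul, Units.mul_inv, map_one]

end PowerSeries

namespace Polynomial

lemma eq_zero_of_wronskian_eq_mul {R : Type*} [CommRing R] [NoZeroDivisors R]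
    {P Q g : R[X]} (hP : P ≠ 0) (hQ : Q ≠ 0) (h : wronskian P Q = P * Q * g) : g = 0 := by
  by_contra hg
  have hlt := degree_wronskian_lt_add hP hQ
  rw [h, degree_mul, degree_mul, degree_eq_natDegree hP, degree_eq_natDegree hQ,
    degree_eq_natDegree hg] at hlt
  norm_cast at hlt
  omega

end Polynomial

open Polynomial

namespace Matrix

variable {R : Type*} [CommRing R] {n m : Type*} [Fintype n] [DecidableEq n]
  [Fintype m] [DecidableEq m]

lemma charpolyRev_map {S : Type*} [CommRing S] (M : Matrix n n R) (f : R →+* S) :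
    (M.map f).charpolyRev = M.charpolyRev.map f := by
  rw [charpolyRev, charpolyRev, ← coe_mapRingHom, RingHom.map_det, RingHom.mapMatrix_apply]
  congr 1
  ext i j
  by_cases h : i = j <;> simp [h]

lemma eval_charpolyRev_eq_det (M : Matrix n n R) (τ : R) :
    M.charpolyRev.eval τ = det (1 - τ • M) := by
  rw [charpolyRev, ← coe_evalRingHom, RingHom.map_det, RingHom.mapMatrix_apply]
  congr 1
  ext i j
  by_cases h : i = j <;> simp [h] <;> ring

lemma taylor_charpolyRev {M U : Matrix n n R} {τ : R} (hU : (1 - τ • M) * U = 1) :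
    taylor τ M.charpolyRev = C (det (1 - τ • M)) * (U * M).charpolyRev := by
  have hfactor : (1 - τ • M).map C * (1 - (X : R[X]) • (U * M).map C) =
      (1 - (X + C τ) • M.map C : Matrix n n R[X]) := by
    rw [Matrix.mul_sub, Matrix.mul_one, Matrix.mul_smul, ← Matrix.map_mul, ← Matrix.mul_assoc, hU,
      Matrix.one_mul]
    ext i j
    by_cases h : i = j <;> simp [h] <;> ring
  change taylorAlgHom τ _ = _
  rw [charpolyRev, charpolyRev, AlgHom.map_det, RingHom.map_det, ← det_mul,
    RingHom.mapMatrix_apply, hfactor]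
  congr 1
  ext i j : 1
  by_cases h : i = j <;> simp [h, taylor_apply] <;> ring

lemma eval_derivative_charpolyRev {M U : Matrix n n R} {τ : R} (hU : (1 - τ • M) * U = 1) :
    (derivative M.charpolyRev).eval τ = -(det (1 - τ • M) * trace (U * M)) := by
  rw [← taylor_coeff_one, taylor_charpolyRev hU, coeff_C_mul, coeff_charpolyRev_eq_neg_trace,
    mul_neg]

def traceSeries (M : Matrix n n R) : R⟦X⟧ :=
  PowerSeries.mk fun k => trace (M ^ (k + 1))

def neumannSeries (M : Matrix n n R) : Matrix n n R⟦X⟧ :=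
  of fun i j => PowerSeries.mk fun k => (M ^ k) i j

lemma coeff_map_C_mul_neumannSeries (M : Matrix n n R) (i j : n) (k : ℕ) :
    PowerSeries.coeff k ((M.map PowerSeries.C * M.neumannSeries) i j) = (M ^ (k + 1)) i j := by
  simp [mul_apply, neumannSeries, map_sum, PowerSeries.coeff_C_mul, pow_succ']

lemma one_sub_X_smul_mul_neumannSeries (M : Matrix n n R) :
    (1 - (PowerSeries.X : R⟦X⟧) • M.map PowerSeries.C) * M.neumannSeries = 1 := by
  ext i j k
  rw [sub_mul, Matrix.one_mul, smul_mul, sub_apply, smul_apply, smul_eq_mul, map_sub]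
  cases k with
  | zero => simp [neumannSeries, one_apply]
  | succ k =>
    rw [PowerSeries.coeff_succ_X_mul, coeff_map_C_mul_neumannSeries, one_apply]
    split_ifs <;> simp [neumannSeries]

lemma trace_neumannSeries_mul (M : Matrix n n R) :
    trace (M.neumannSeries * M.map PowerSeries.C) = traceSeries M := by
  ext k
  rw [trace_mul_comm, trace, map_sum, traceSeries, PowerSeries.coeff_mk, trace]
  simp only [diag_apply, coeff_map_C_mul_neumannSeries]

lemma derivative_coe_charpolyRev (M : Matrix n n R) :
    d⁄dX R (M.charpolyRev : R⟦X⟧) = -(M.charpolyRev * traceSeries M) := by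
  have hcoe (p : R[X]) : (p : R⟦X⟧) = (p.map PowerSeries.C).eval PowerSeries.X := by
    rw [eval_map, eval₂_C_X_eq_coe]
  rw [PowerSeries.derivative_coe, hcoe, hcoe, ← derivative_map, ← charpolyRev_map,
    eval_derivative_charpolyRev (one_sub_X_smul_mul_neumannSeries M), eval_charpolyRev_eq_det,
    trace_neumannSeries_mul]

theorem trace_pow_eq_of_shiftEquiv {A : Matrix n n R} {B : Matrix m m R} {R₀ : Matrix n m R}
    {S : Matrix m n R} {ℓ N : ℕ} (hA : A ^ ℓ = R₀ * S) (hB : B ^ ℓ = S * R₀)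
    (hSA : S * A = B * S) (hN : ℓ ≤ N) : trace (A ^ N) = trace (B ^ N) := by
  have hpow (c : ℕ) : S * A ^ c = B ^ c * S := by
    induction c with
    | zero => simp
    | succ c ih =>
      rw [pow_succ, pow_succ, ← Matrix.mul_assoc, ih, Matrix.mul_assoc, hSA, ← Matrix.mul_assoc]
  obtain ⟨c, rfl⟩ : ∃ c, N = c + ℓ := ⟨N - ℓ, by omega⟩
  calc trace (A ^ (c + ℓ)) = trace (A ^ c * R₀ * S) := by rw [pow_add, hA, Matrix.mul_assoc]
    _ = trace (S * A ^ c * R₀) := by rw [trace_mul_comm, Matrix.mul_assoc]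
    _ = trace (B ^ (c + ℓ)) := by rw [hpow, Matrix.mul_assoc, ← hB, ← pow_add]

lemma constantCoeff_coe_charpolyRev (M : Matrix n n R) :
    PowerSeries.constantCoeff (M.charpolyRev : R⟦X⟧) = 1 := by
  rw [Polynomial.constantCoeff_coe, coeff_zero_eq_eval_zero, eval_charpolyRev]

lemma charpolyRev_ne_zero [Nontrivial R] (M : Matrix n n R) : M.charpolyRev ≠ 0 :=
  fun h => by simpa [h] using M.eval_charpolyRev

theorem charpolyRev_eq_of_trace_pow_eq [IsDomain R] [IsAddTorsionFree R]
    (A : Matrix n n R) (B : Matrix m m R) (ℓ : ℕ)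
    (h : ∀ N, ℓ ≤ N → trace (A ^ N) = trace (B ^ N)) : A.charpolyRev = B.charpolyRev := by
  obtain ⟨g, hg⟩ : ∃ g : R[X], (g : R⟦X⟧) = traceSeries A - traceSeries B := by
    refine ⟨PowerSeries.trunc ℓ (traceSeries A - traceSeries B), ?_⟩
    ext k
    rw [Polynomial.coeff_coe, PowerSeries.coeff_trunc]
    split_ifs with hk
    · rfl
    · simp [traceSeries, h (k + 1) (by omega)]
  have hW : wronskian A.charpolyRev B.charpolyRev = A.charpolyRev * B.charpolyRev * g := by
    apply Polynomial.coe_injective R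
    push_cast [wronskian]
    rw [← PowerSeries.derivative_coe, ← PowerSeries.derivative_coe, derivative_coe_charpolyRev,
      derivative_coe_charpolyRev, hg]
    ring
  have hT : traceSeries A = traceSeries B := by
    rw [← sub_eq_zero, ← hg,
      eq_zero_of_wronskian_eq_mul (charpolyRev_ne_zero A) (charpolyRev_ne_zero B) hW,
      Polynomial.coe_zero]
  apply Polynomial.coe_injective R
  refine PowerSeries.eq_of_derivative_eq_mul (T := -traceSeries B) ?_ ?_ ?_ ?_
  · rw [derivative_coe_charpolyRev, hT, mul_neg]
  · rw [derivative_coe_charpolyRev, mul_neg]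
  · rw [constantCoeff_coe_charpolyRev]
    exact isUnit_one
  · rw [constantCoeff_coe_charpolyRev, constantCoeff_coe_charpolyRev]

end Matrix

open Matrix

/-- shift equivalent integer matrices have the same reversed
characteristic polynomial `det (I - t A)`. -/
theorem shiftEquiv_det_one_sub_tA (n m : ℕ)
    (A : Matrix (Fin n) (Fin n) ℤ) (B : Matrix (Fin m) (Fin m) ℤ)
    (hSE : ∃ (ℓ : ℕ) (R₀ : Matrix (Fin n) (Fin m) ℤ) (S : Matrix (Fin m) (Fin n) ℤ),
      0 < ℓ ∧ A ^ ℓ = R₀ * S ∧ B ^ ℓ = S * R₀ ∧ A * R₀ = R₀ * B ∧ S * A = B * S) :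
    (1 - (X : Polynomial ℤ) • A.map Polynomial.C).det =
      (1 - (X : Polynomial ℤ) • B.map Polynomial.C).det := by
  obtain ⟨ℓ, R₀, S, -, hA, hB, -, hSA⟩ := hSE
  exact charpolyRev_eq_of_trace_pow_eq A B ℓ fun _ hN => trace_pow_eq_of_shiftEquiv hA hB hSA hN
end

section
/- If square integer matrices A (n×n) and B (m×m) are shift equivalent over Z, then the cokernel groups Z^n/(I−A)Z^n and Z^m/(I−B)Z^m are isomorphic as abelian groups. -/
/-!
`S` and `R₀` intertwine `1 - A` and `1 - B`, so they induce maps between the cokernels.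
Both composites are induced by `A ^ ℓ` resp. `B ^ ℓ`, and `M ^ ℓ` acts trivially on the
cokernel of `1 - M` because `1 - M ^ ℓ = (1 - M) * ∑ i < ℓ, M ^ i`.
-/

open Matrix

namespace LinearMap

variable {R M N : Type*} [Ring R] [AddCommGroup M] [Module R M] [AddCommGroup N] [Module R N]

theorem pow_apply_sub_self_mem_range_one_sub (f : Module.End R M) (ℓ : ℕ) (x : M) :
    (f ^ ℓ) x - x ∈ range (1 - f) := by
  refine ⟨-(∑ i ∈ Finset.range ℓ, f ^ i) x, ?_⟩
  rw [map_neg, ← Module.End.mul_apply, mul_neg_geom_sum, sub_apply, Module.End.one_apply, neg_sub]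

theorem mkQ_comp_pow_range_one_sub (f : Module.End R M) (ℓ : ℕ) :
    (range (1 - f)).mkQ ∘ₗ f ^ ℓ = (range (1 - f)).mkQ :=
  ext fun x => (Submodule.Quotient.eq _).mpr (pow_apply_sub_self_mem_range_one_sub f ℓ x)

theorem range_one_sub_le_comap {f : Module.End R M} {g : Module.End R N} {s : M →ₗ[R] N}
    (h : s ∘ₗ f = g ∘ₗ s) : range (1 - f) ≤ (range (1 - g)).comap s := by
  rintro _ ⟨y, rfl⟩
  refine ⟨s y, ?_⟩
  rw [sub_apply, sub_apply, Module.End.one_apply, Module.End.one_apply, map_sub,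
    ← comp_apply s f, h, comp_apply]

def quotRangeOneSubMap {f : Module.End R M} {g : Module.End R N} (s : M →ₗ[R] N)
    (h : s ∘ₗ f = g ∘ₗ s) : (M ⧸ range (1 - f)) →ₗ[R] N ⧸ range (1 - g) :=
  (range (1 - f)).mapQ (range (1 - g)) s (range_one_sub_le_comap h)

theorem quotRangeOneSubMap_comp_eq_id {f : Module.End R M} {g : Module.End R N}
    {s : M →ₗ[R] N} {r : N →ₗ[R] M} (hs : s ∘ₗ f = g ∘ₗ s) (hr : r ∘ₗ g = f ∘ₗ r) {ℓ : ℕ}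
    (hf : f ^ ℓ = r ∘ₗ s) : quotRangeOneSubMap r hr ∘ₗ quotRangeOneSubMap s hs = id := by
  refine Submodule.linearMap_qext _ ?_
  rw [id_comp, quotRangeOneSubMap, quotRangeOneSubMap, comp_assoc, Submodule.mapQ_mkQ,
    ← comp_assoc, Submodule.mapQ_mkQ, comp_assoc, ← hf, mkQ_comp_pow_range_one_sub]

def quotRangeOneSubEquivOfShiftEquiv {f : Module.End R M} {g : Module.End R N}
    {s : M →ₗ[R] N} {r : N →ₗ[R] M} (hs : s ∘ₗ f = g ∘ₗ s) (hr : r ∘ₗ g = f ∘ₗ r) {ℓ : ℕ}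
    (hf : f ^ ℓ = r ∘ₗ s) (hg : g ^ ℓ = s ∘ₗ r) :
    (M ⧸ range (1 - f)) ≃ₗ[R] N ⧸ range (1 - g) :=
  LinearEquiv.ofLinearMap (quotRangeOneSubMap s hs) (quotRangeOneSubMap r hr)
    (quotRangeOneSubMap_comp_eq_id hr hs hg) (quotRangeOneSubMap_comp_eq_id hs hr hf)

end LinearMap

theorem Matrix.mulVecLin_one_sub {ι R : Type*} [Fintype ι] [DecidableEq ι] [CommRing R]
    (A : Matrix ι ι R) : (1 - A).mulVecLin = 1 - A.mulVecLin := by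
  rw [← toLin'_apply', map_sub, toLin'_one, toLin'_apply', Module.End.one_eq_id]

/-- shift equivalent integer matrices have isomorphic cokernel
groups `ℤⁿ/(I−A)ℤⁿ` and `ℤᵐ/(I−B)ℤᵐ`. -/
theorem shiftEquiv_cokernel_iso (n m : ℕ)
    (A : Matrix (Fin n) (Fin n) ℤ) (B : Matrix (Fin m) (Fin m) ℤ)
    (hSE : ∃ (ℓ : ℕ) (R₀ : Matrix (Fin n) (Fin m) ℤ) (S : Matrix (Fin m) (Fin n) ℤ),
      0 < ℓ ∧ A ^ ℓ = R₀ * S ∧ B ^ ℓ = S * R₀ ∧ A * R₀ = R₀ * B ∧ S * A = B * S) :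
    Nonempty
      (((Fin n → ℤ) ⧸ LinearMap.range ((1 - A).mulVecLin)) ≃+
        ((Fin m → ℤ) ⧸ LinearMap.range ((1 - B).mulVecLin))) := by
  obtain ⟨ℓ, R₀, S, -, hA, hB, hAR, hSA⟩ := hSE
  have hS : toLin' S ∘ₗ toLin' A = toLin' B ∘ₗ toLin' S := by
    rw [← toLin'_mul, hSA, toLin'_mul]
  have hR : toLin' R₀ ∘ₗ toLin' B = toLin' A ∘ₗ toLin' R₀ := by
    rw [← toLin'_mul, ← hAR, toLin'_mul]
  have hAℓ : toLin' A ^ ℓ = toLin' R₀ ∘ₗ toLin' S := by rw [← toLin'_pow, hA, toLin'_mul]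
  have hBℓ : toLin' B ^ ℓ = toLin' S ∘ₗ toLin' R₀ := by rw [← toLin'_pow, hB, toLin'_mul]
  rw [mulVecLin_one_sub, mulVecLin_one_sub, ← toLin'_apply', ← toLin'_apply']
  exact ⟨(LinearMap.quotRangeOneSubEquivOfShiftEquiv hS hR hAℓ hBℓ).toAddEquiv⟩
end

section
/- Let A, B, C, D, E be matrices over a semiring with compatible sizes such that the block products below make sense. Then [[A, B, C],[0, 0, D],[0, 0, E]] equals the product [[I, C],[0, D],[0, E]] · [[A, B, 0],[0, 0, I]], and the reversed product [[A, B, 0],[0, 0, I]] · [[I, C],[0, D],[0, E]] equals [[A, AC+BD],[0, E]]. Consequently, the block matrix [[A, B, C],[0, 0, D],[0, 0, E]] with a zero middle diagonal block is elementarily strong-shift-equivalent to [[A, AC+BD],[0, E]]. -/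
open Matrix

section

variable {R : Type*} [Semiring R] {l m n : Type*} [Fintype l] [Fintype n]
  [DecidableEq l] [DecidableEq n]

theorem fromBlocks_one_fromRows_mul_fromBlocks_fromCols_zero_one (A : Matrix l l R)
    (B : Matrix l m R) (C : Matrix l n R) (D : Matrix m n R) (E : Matrix n n R) :
    fromBlocks (1 : Matrix l l R) C 0 (fromRows D E) *
        fromBlocks A (fromCols B 0) 0 (fromCols 0 (1 : Matrix n n R)) =
      fromBlocks A (fromCols B C) 0 (fromBlocks 0 D 0 E) := by
  have hcols : fromCols B 0 + C * fromCols 0 (1 : Matrix n n R) = fromCols B C := by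
    rw [mul_fromCols, Matrix.mul_zero, Matrix.mul_one]
    ext i (j | j) <;> simp
  simp only [fromBlocks_multiply, fromRows_mul_fromCols, Matrix.one_mul, Matrix.mul_zero,
    Matrix.mul_one, Matrix.zero_mul, add_zero, zero_add, hcols]

theorem fromBlocks_fromCols_zero_one_mul_fromBlocks_one_fromRows [Fintype m] (A : Matrix l l R)
    (B : Matrix l m R) (C : Matrix l n R) (D : Matrix m n R) (E : Matrix n n R) :
    fromBlocks A (fromCols B 0) 0 (fromCols 0 (1 : Matrix n n R)) *
        fromBlocks 1 C 0 (fromRows D E) =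
      fromBlocks A (A * C + B * D) 0 E := by
  simp only [fromBlocks_multiply, fromCols_mul_fromRows, Matrix.mul_one, Matrix.mul_zero,
    Matrix.zero_mul, Matrix.one_mul, add_zero, zero_add]

end

/-- elimination of a zero middle diagonal block by an elementary
strong shift equivalence over a semiring. -/
theorem esse_eliminate_zero_block {α : Type*} [Semiring α] {a b c : ℕ}
    (A : Matrix (Fin a) (Fin a) α) (B : Matrix (Fin a) (Fin b) α)
    (C : Matrix (Fin a) (Fin c) α) (D : Matrix (Fin b) (Fin c) α)
    (E : Matrix (Fin c) (Fin c) α) :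
    let big : Matrix (Fin a ⊕ (Fin b ⊕ Fin c)) (Fin a ⊕ (Fin b ⊕ Fin c)) α :=
      Matrix.fromBlocks A (Matrix.fromCols B C) 0 (Matrix.fromBlocks 0 D 0 E)
    let F₁ : Matrix (Fin a ⊕ (Fin b ⊕ Fin c)) (Fin a ⊕ Fin c) α :=
      Matrix.fromBlocks 1 C 0 (Matrix.fromRows D E)
    let F₂ : Matrix (Fin a ⊕ Fin c) (Fin a ⊕ (Fin b ⊕ Fin c)) α :=
      Matrix.fromBlocks A (Matrix.fromCols B 0) 0 (Matrix.fromCols 0 1)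
    let small : Matrix (Fin a ⊕ Fin c) (Fin a ⊕ Fin c) α :=
      Matrix.fromBlocks A (A * C + B * D) 0 E
    big = F₁ * F₂ ∧ F₂ * F₁ = small ∧
      ∃ (R : Matrix (Fin a ⊕ (Fin b ⊕ Fin c)) (Fin a ⊕ Fin c) α)
        (S : Matrix (Fin a ⊕ Fin c) (Fin a ⊕ (Fin b ⊕ Fin c)) α),
        big = R * S ∧ small = S * R := by
  intro big F₁ F₂ small
  have hbig : big = F₁ * F₂ :=
    (fromBlocks_one_fromRows_mul_fromBlocks_fromCols_zero_one A B C D E).symm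
  have hsmall : F₂ * F₁ = small :=
    fromBlocks_fromCols_zero_one_mul_fromBlocks_one_fromRows A B C D E
  exact ⟨hbig, hsmall, F₁, F₂, hbig, hsmall.symm⟩
end

section
/- Let A be an n×n matrix over the nonnegative integers of block upper-triangular form A = [[N₁, X, Y],[0, P, Z],[0, 0, N₂]] with N₁ (a×a) and N₂ (c×c) nilpotent and P (b×b) a permutation matrix corresponding to a b-cycle. Then the cokernel group G = Z^n/(I−A)Z^n is infinite cyclic, generated by the class of any standard basis vector e whose index belongs to the middle (P) block; moreover any two standard basis vectors from the middle block have equal classes in G. -/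
/-!
In a block upper-triangular matrix, a diagonal block that is invertible can be cleared without
changing the cokernel, and `1 - N` is invertible for nilpotent `N`. So the cokernel of `1 - A` is
that of `1 - P`, which for a single cycle `σ` is `ℤ` via the sum of coordinates, because the
classes of `eⱼ` and `e_{σ j}` agree. Composing these reductions gives a functional `φ` with
`range (1 - A) = ker φ` and `φ = 1` on every middle basis vector.
-/

open Matrix

theorem Submodule.bijective_smul_mk_of_eq_ker {R M : Type*} [CommRing R] [AddCommGroup M]
    [Module R M] {p : Submodule R M} {φ : M →ₗ[R] R} (hp : p = LinearMap.ker φ) {x : M}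
    (hx : φ x = 1) : Function.Bijective fun r : R => r • (Submodule.Quotient.mk x : M ⧸ p) := by
  subst hp
  refine ⟨fun r s hrs => ?_, fun y => ?_⟩
  · simpa [hx] using congrArg ((LinearMap.ker φ).liftQ φ le_rfl) hrs
  · obtain ⟨v, rfl⟩ := Submodule.Quotient.mk_surjective _ y
    exact ⟨φ v, (Submodule.Quotient.eq _).mpr (by simp [hx])⟩

namespace Matrix

variable {R : Type*} [CommRing R] {l m n : Type*}

theorem one_sub_fromBlocks [DecidableEq l] [DecidableEq m] (A : Matrix l l R) (B : Matrix l m R)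
    (C : Matrix m l R) (D : Matrix m m R) :
    1 - fromBlocks A B C D = fromBlocks (1 - A) (-B) (-C) (1 - D) := by
  rw [← fromBlocks_one, sub_eq_add_neg, fromBlocks_neg, fromBlocks_add]
  simp only [sub_eq_add_neg, zero_add]

theorem range_mulVecLin_fromBlocks_of_isUnit_left [Fintype l] [Fintype n] [DecidableEq l]
    {U : Matrix l l R} (hU : IsUnit U) (B : Matrix l n R) (D : Matrix m n R) :
    LinearMap.range (fromBlocks U B 0 D).mulVecLin =
      (LinearMap.range D.mulVecLin).comap (LinearMap.funLeft R R Sum.inr) := by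
  have hUU := U.mul_nonsing_inv (U.isUnit_iff_isUnit_det.mp hU)
  ext v
  simp only [Submodule.mem_comap, LinearMap.mem_range, mulVecLin_apply, LinearMap.funLeft,
    LinearMap.coe_mk, AddHom.coe_mk]
  constructor
  · rintro ⟨x, rfl⟩
    exact ⟨x ∘ Sum.inr, by ext; simp [fromBlocks_mulVec]⟩
  · rintro ⟨y, hy⟩
    refine ⟨Sum.elim (U⁻¹ *ᵥ (v ∘ Sum.inl - B *ᵥ y)) y, ?_⟩
    ext (i | i) <;> simp [fromBlocks_mulVec, mulVec_mulVec, hUU, hy]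

theorem range_mulVecLin_fromBlocks_of_isUnit_right [Fintype m] [Fintype n] [DecidableEq n]
    (D : Matrix l m R) (B : Matrix l n R) {U : Matrix n n R} (hU : IsUnit U) :
    LinearMap.range (fromBlocks D B 0 U).mulVecLin =
      (LinearMap.range D.mulVecLin).comap (LinearMap.funLeft R R Sum.inl -
        B.mulVecLin ∘ₗ U⁻¹.mulVecLin ∘ₗ LinearMap.funLeft R R Sum.inr) := by
  have hdet := U.isUnit_iff_isUnit_det.mp hU
  ext v
  simp only [Submodule.mem_comap, LinearMap.mem_range, mulVecLin_apply, LinearMap.sub_apply,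
    LinearMap.comp_apply, LinearMap.funLeft, LinearMap.coe_mk, AddHom.coe_mk]
  constructor
  · rintro ⟨x, rfl⟩
    refine ⟨x ∘ Sum.inl, ?_⟩
    ext i
    simp [fromBlocks_mulVec, mulVec_mulVec, nonsing_inv_mul _ hdet]
  · rintro ⟨y, hy⟩
    refine ⟨Sum.elim y (U⁻¹ *ᵥ (v ∘ Sum.inr)), ?_⟩
    ext (i | i)
    · simp [fromBlocks_mulVec, hy]
    · simp [fromBlocks_mulVec, mulVec_mulVec, mul_nonsing_inv _ hdet]

theorem range_mulVecLin_one_sub_permMatrix [Fintype m] [DecidableEq m] {σ : Equiv.Perm m}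
    (hσ : ∀ i j, σ.SameCycle i j) :
    LinearMap.range (1 - σ.permMatrix R).mulVecLin =
      LinearMap.ker (∑ i, LinearMap.proj i : (m → R) →ₗ[R] R) := by
  set p := LinearMap.range (1 - σ.permMatrix R).mulVecLin
  have hsub : ∀ v : m → R, (1 - σ.permMatrix R) *ᵥ v = v - v ∘ σ := fun v => by
    rw [sub_mulVec, one_mulVec, permMatrix_mulVec]
  ext v
  simp only [LinearMap.mem_ker, LinearMap.sum_apply, LinearMap.proj_apply]
  constructor
  · rintro ⟨x, rfl⟩
    simp only [mulVecLin_apply, hsub, Pi.sub_apply, Finset.sum_sub_distrib, Function.comp_apply,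
      Equiv.sum_comp, sub_self]
  · intro hv
    rcases isEmpty_or_nonempty m with _ | ⟨⟨i₀⟩⟩
    · rw [Subsingleton.elim v 0]
      exact zero_mem p
    let e : m → (m → R) ⧸ p := fun j => Submodule.Quotient.mk (Pi.single j 1)
    -- `(1 - P) e_{σ j} = e_{σ j} - e_j`
    have he_comp : e ∘ σ = e := funext fun j => by
      refine (Submodule.Quotient.eq _).mpr ⟨Pi.single (σ j) 1, ?_⟩
      rw [mulVecLin_apply, hsub, Pi.single_comp_equiv, Equiv.symm_apply_apply]
    have he_const : ∀ j, e j = e i₀ := fun j => by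
      obtain ⟨k, rfl⟩ := (hσ i₀ j).exists_nat_pow_eq
      rw [Equiv.Perm.coe_pow, ← Function.comp_apply (f := e), Function.iterate_invariant he_comp]
    rw [← Submodule.Quotient.mk_eq_zero, pi_eq_sum_univ' v, ← Submodule.mkQ_apply, map_sum]
    simp only [map_smul, Submodule.mkQ_apply]
    change ∑ j, v j • e j = 0
    simp only [he_const, ← Finset.sum_smul, hv, zero_smul]

theorem exists_range_one_sub_fromBlocks_permMatrix_eq_ker [Fintype l] [Fintype m]
    [Fintype n] [DecidableEq l] [DecidableEq m] [DecidableEq n] {N₁ : Matrix l l R}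
    (hN₁ : IsNilpotent N₁) (X : Matrix l m R) (Y : Matrix l n R) {σ : Equiv.Perm m}
    (hσ : ∀ i j, σ.SameCycle i j) (Z : Matrix m n R) {N₂ : Matrix n n R} (hN₂ : IsNilpotent N₂) :
    ∃ φ : (l ⊕ (m ⊕ n) → R) →ₗ[R] R,
      LinearMap.range
          (1 - fromBlocks N₁ (fromCols X Y) 0 (fromBlocks (σ.permMatrix R) Z 0 N₂)).mulVecLin =
        LinearMap.ker φ ∧
      ∀ j, φ (Pi.single (Sum.inr (Sum.inl j)) 1) = 1 := by
  refine ⟨(∑ i, LinearMap.proj i) ∘ₗ (LinearMap.funLeft R R Sum.inl -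
      (-Z).mulVecLin ∘ₗ (1 - N₂)⁻¹.mulVecLin ∘ₗ LinearMap.funLeft R R Sum.inr) ∘ₗ
      LinearMap.funLeft R R Sum.inr, ?_, fun j => ?_⟩
  · rw [one_sub_fromBlocks, one_sub_fromBlocks, neg_zero, neg_zero,
      range_mulVecLin_fromBlocks_of_isUnit_left hN₁.isUnit_one_sub,
      range_mulVecLin_fromBlocks_of_isUnit_right _ _ hN₂.isUnit_one_sub,
      range_mulVecLin_one_sub_permMatrix hσ, LinearMap.ker_comp, Submodule.comap_comp]
  · have hbot :
        ((Pi.single (Sum.inr (Sum.inl j)) 1 : l ⊕ (m ⊕ n) → R) ∘ Sum.inr) ∘ Sum.inr = 0 := by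
      ext
      simp
    simp [hbot, LinearMap.funLeft, Pi.single_apply]

end Matrix

theorem esscyclic_cokernel_infinite_cyclic_general (a b c : ℕ)
    (N₁ : Matrix (Fin a) (Fin a) ℤ) (X : Matrix (Fin a) (Fin b) ℤ)
    (Y : Matrix (Fin a) (Fin c) ℤ) (P : Matrix (Fin b) (Fin b) ℤ)
    (Z : Matrix (Fin b) (Fin c) ℤ) (N₂ : Matrix (Fin c) (Fin c) ℤ)
    (A : Matrix (Fin a ⊕ (Fin b ⊕ Fin c)) (Fin a ⊕ (Fin b ⊕ Fin c)) ℤ)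
    (hA : A = Matrix.fromBlocks N₁ (Matrix.fromCols X Y) 0
      (Matrix.fromBlocks P Z 0 N₂))
    (hN₁ : IsNilpotent N₁) (hN₂ : IsNilpotent N₂)
    (σ : Equiv.Perm (Fin b))
    (hP : P = Matrix.of fun i j => if σ i = j then (1 : ℤ) else 0)
    (hσ : ∀ i j : Fin b, ∃ k : ℕ, (σ ^ k) i = j) :
    (∀ i j : Fin b,
      (Submodule.Quotient.mk (Pi.single (Sum.inr (Sum.inl i)) 1) :
          (Fin a ⊕ (Fin b ⊕ Fin c) → ℤ) ⧸ LinearMap.range ((1 - A).mulVecLin)) =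
        Submodule.Quotient.mk (Pi.single (Sum.inr (Sum.inl j)) 1)) ∧
    ∀ i : Fin b,
      Function.Bijective (fun k : ℤ =>
        k • (Submodule.Quotient.mk (Pi.single (Sum.inr (Sum.inl i)) 1) :
          (Fin a ⊕ (Fin b ⊕ Fin c) → ℤ) ⧸ LinearMap.range ((1 - A).mulVecLin))) := by
  have hPσ : P = σ.permMatrix ℤ := by
    ext i j
    simp [hP, PEquiv.toMatrix_apply]
  have hcycle : ∀ i j, σ.SameCycle i j := fun i j =>
    let ⟨k, hk⟩ := hσ i j
    ⟨k, by rwa [zpow_natCast]⟩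
  obtain ⟨φ, hφ, hφ_mid⟩ :=
    exists_range_one_sub_fromBlocks_permMatrix_eq_ker hN₁ X Y hcycle Z hN₂
  rw [← hPσ, ← hA] at hφ
  refine ⟨fun i j => (Submodule.Quotient.eq _).mpr ?_,
    fun i => Submodule.bijective_smul_mk_of_eq_ker hφ (hφ_mid i)⟩
  rw [hφ, LinearMap.mem_ker, map_sub, hφ_mid, hφ_mid, sub_self]

/-- for an essentially cyclic nonnegative integer matrix in the
block form `[[N₁,X,Y],[0,P,Z],[0,0,N₂]]` (`N₁`,`N₂` nilpotent, `P` the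
permutation matrix of a single cycle), the cokernel `ℤⁿ/(I−A)ℤⁿ` is infinite
cyclic, generated by the class of any middle-block standard basis vector, and
all such classes coincide. -/
theorem esscyclic_cokernel_infinite_cyclic (a b c : ℕ)
    (N₁ : Matrix (Fin a) (Fin a) ℤ) (X : Matrix (Fin a) (Fin b) ℤ)
    (Y : Matrix (Fin a) (Fin c) ℤ) (P : Matrix (Fin b) (Fin b) ℤ)
    (Z : Matrix (Fin b) (Fin c) ℤ) (N₂ : Matrix (Fin c) (Fin c) ℤ)
    (A : Matrix (Fin a ⊕ (Fin b ⊕ Fin c)) (Fin a ⊕ (Fin b ⊕ Fin c)) ℤ)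
    (hA : A = Matrix.fromBlocks N₁ (Matrix.fromCols X Y) 0
      (Matrix.fromBlocks P Z 0 N₂))
    (hnn : ∀ i j, 0 ≤ A i j)
    (hN₁ : IsNilpotent N₁) (hN₂ : IsNilpotent N₂)
    (σ : Equiv.Perm (Fin b))
    (hP : P = Matrix.of fun i j => if σ i = j then (1 : ℤ) else 0)
    (hσ : ∀ i j : Fin b, ∃ k : ℕ, (σ ^ k) i = j) :
    (∀ i j : Fin b,
      (Submodule.Quotient.mk (Pi.single (Sum.inr (Sum.inl i)) 1) :
          (Fin a ⊕ (Fin b ⊕ Fin c) → ℤ) ⧸ LinearMap.range ((1 - A).mulVecLin)) =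
        Submodule.Quotient.mk (Pi.single (Sum.inr (Sum.inl j)) 1)) ∧
    ∀ i : Fin b,
      Function.Bijective (fun k : ℤ =>
        k • (Submodule.Quotient.mk (Pi.single (Sum.inr (Sum.inl i)) 1) :
          (Fin a ⊕ (Fin b ⊕ Fin c) → ℤ) ⧸ LinearMap.range ((1 - A).mulVecLin))) :=
  esscyclic_cokernel_infinite_cyclic_general a b c N₁ X Y P Z N₂ A hA hN₁ hN₂ σ hP hσ
end

section
/- Let A = [[N₁, X, Y],[0, P, Z],[0, 0, N₂]] be a nonnegative integer matrix with N₁, N₂ nilpotent and P the permutation matrix of a single cycle, and let e be a standard basis vector from the middle block, so Z^n/(I−A)Z^n = Z·[e]. Then there exist nonnegative integers n₁,…,n_c such that for every column vector v = (x, y, z) ∈ Z^a × Z^b × Z^c, the class of v in the cokernel equals (y₁ + ⋯ + y_b + n₁z₁ + ⋯ + n_c z_c)·[e]. -/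
open Matrix

/-!
Write `s = ∑ yᵢ + ∑ nₖ zₖ` and `e` for the middle basis vector. The vector `(x, y - s e, z)` lies in
`(1 - A) ℤⁿ` because the equation `(1 - A) t = (x, y', z)` can be solved block by block from the
bottom: `1 - N₂` has the right inverse `M = ∑ N₂ⁱ`, so the third block is solved by `M z` at the
cost of replacing `y'` by `y' + Z M z`; the middle block is solvable as soon as the entries of that
vector sum to zero, since `(1 - P) e_{σ j} = e_{σ j} - e_j` and `σ` is a single cycle; and the
first block is always solvable because `1 - N₁` is invertible. Taking `nₖ` to be the `k`-th column
sum of `Z M` makes the middle entries sum to zero, and `nₖ ≥ 0` because `Z` and `N₂` are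
nonnegative.
-/

theorem one_sub_mul_geom_sum_of_pow_eq_zero {R : Type*} [Ring R] {x : R} {m : ℕ} (hx : x ^ m = 0) :
    (1 - x) * ∑ i ∈ Finset.range m, x ^ i = 1 := by
  rw [mul_neg_geom_sum, hx, sub_zero]

namespace Matrix

section Nonneg

variable {α : Type*} [Semiring α] [PartialOrder α] [IsOrderedRing α] {l m n : Type*} [Fintype m]

theorem mul_apply_nonneg {A : Matrix l m α} {B : Matrix m n α} (hA : ∀ i j, 0 ≤ A i j)
    (hB : ∀ i j, 0 ≤ B i j) (i : l) (j : n) : 0 ≤ (A * B) i j := by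
  rw [mul_apply]
  exact Finset.sum_nonneg fun k _ => mul_nonneg (hA i k) (hB k j)

theorem geom_sum_apply_nonneg [DecidableEq m] {N : Matrix m m α} (hN : ∀ i j, 0 ≤ N i j) (k : ℕ)
    (i j : m) :
    0 ≤ (∑ p ∈ Finset.range k, N ^ p) i j := by
  rw [sum_apply]
  exact Finset.sum_nonneg fun p _ => pow_apply_nonneg hN p i j

end Nonneg

variable {R : Type*} [CommRing R] {m n : Type*} [Fintype m] [Fintype n] [DecidableEq m]
  [DecidableEq n]

theorem one_sub_fromBlocks_zero₂₁_mulVec (A : Matrix m m R) (B : Matrix m n R) (D : Matrix n n R)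
    (u : m → R) (v : n → R) :
    (1 - fromBlocks A B 0 D) *ᵥ Sum.elim u v = Sum.elim ((1 - A) *ᵥ u - B *ᵥ v) ((1 - D) *ᵥ v) := by
  ext (i | i) <;> simp [sub_mulVec, fromBlocks_mulVec]; abel

theorem sumElim_mem_range_one_sub_fromBlocks_of_mem_right {N M : Matrix m m R}
    (hM : (1 - N) * M = 1) (B : Matrix m n R) {D : Matrix n n R} (u : m → R) {v : n → R}
    (hv : v ∈ LinearMap.range (1 - D).mulVecLin) :
    Sum.elim u v ∈ LinearMap.range (1 - fromBlocks N B 0 D).mulVecLin := by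
  obtain ⟨t, rfl⟩ := hv
  refine ⟨Sum.elim (M *ᵥ (u + B *ᵥ t)) t, ?_⟩
  rw [mulVecLin_apply, one_sub_fromBlocks_zero₂₁_mulVec, mulVec_mulVec, hM, one_mulVec,
    add_sub_cancel_right, mulVecLin_apply]

theorem sumElim_mem_range_one_sub_fromBlocks_of_mem_left {P : Matrix m m R} (Z : Matrix m n R)
    {N M : Matrix n n R} (hM : (1 - N) * M = 1) {y : m → R} (z : n → R)
    (hy : y + Z *ᵥ (M *ᵥ z) ∈ LinearMap.range (1 - P).mulVecLin) :
    Sum.elim y z ∈ LinearMap.range (1 - fromBlocks P Z 0 N).mulVecLin := by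
  obtain ⟨s, hs⟩ := hy
  refine ⟨Sum.elim s (M *ᵥ z), ?_⟩
  rw [mulVecLin_apply, one_sub_fromBlocks_zero₂₁_mulVec, ← mulVecLin_apply, hs, add_sub_cancel_right,
    mulVec_mulVec, hM, one_mulVec]

theorem single_apply_sub_single_mem_range_one_sub_permMatrix (σ : Equiv.Perm n) (j : n) :
    Pi.single (σ j) 1 - Pi.single j 1 ∈ LinearMap.range (1 - σ.permMatrix R).mulVecLin :=
  ⟨Pi.single (σ j) 1, by
    rw [mulVecLin_apply, sub_mulVec, one_mulVec, permMatrix_mulVec, Pi.single_comp_equiv,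
      Equiv.symm_apply_apply]⟩

theorem single_pow_apply_sub_single_mem_range_one_sub_permMatrix (σ : Equiv.Perm n) (k : ℕ)
    (i : n) :
    Pi.single ((σ ^ k) i) 1 - Pi.single i 1 ∈ LinearMap.range (1 - σ.permMatrix R).mulVecLin := by
  induction k with
  | zero => simp
  | succ k ih =>
    rw [pow_succ', Equiv.Perm.mul_apply, ← sub_add_sub_cancel _ (Pi.single ((σ ^ k) i) 1)]
    exact add_mem (single_apply_sub_single_mem_range_one_sub_permMatrix σ _) ih

theorem sub_sum_smul_single_mem_range_one_sub_permMatrix {σ : Equiv.Perm n}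
    (hσ : ∀ i j, ∃ k : ℕ, (σ ^ k) i = j) (y : n → R) (i₀ : n) :
    y - (∑ i, y i) • Pi.single i₀ 1 ∈ LinearMap.range (1 - σ.permMatrix R).mulVecLin := by
  have hy : y - (∑ i, y i) • Pi.single i₀ 1 = ∑ j, y j • (Pi.single j 1 - Pi.single i₀ 1) := by
    simp only [smul_sub, Finset.sum_sub_distrib, Finset.sum_smul, ← Pi.single_smul, smul_eq_mul,
      mul_one, Finset.univ_sum_single]
  rw [hy]
  refine Submodule.sum_mem _ fun j _ => Submodule.smul_mem _ _ ?_
  obtain ⟨k, rfl⟩ := hσ i₀ j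
  exact single_pow_apply_sub_single_mem_range_one_sub_permMatrix σ k i₀

end Matrix

/-- in the cokernel of `I−A` for an essentially cyclic nonnegative
integer matrix, the class of `(x,y,z)` equals `(Σᵢ yᵢ + Σₖ nₖ zₖ)·[e]` for some
nonnegative integers `nₖ`, where `e` is a middle-block standard basis vector. -/
theorem esscyclic_cokernel_formula (a b c : ℕ)
    (N₁ : Matrix (Fin a) (Fin a) ℤ) (X : Matrix (Fin a) (Fin b) ℤ)
    (Y : Matrix (Fin a) (Fin c) ℤ) (P : Matrix (Fin b) (Fin b) ℤ)
    (Z : Matrix (Fin b) (Fin c) ℤ) (N₂ : Matrix (Fin c) (Fin c) ℤ)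
    (A : Matrix (Fin a ⊕ (Fin b ⊕ Fin c)) (Fin a ⊕ (Fin b ⊕ Fin c)) ℤ)
    (hA : A = Matrix.fromBlocks N₁ (Matrix.fromCols X Y) 0
      (Matrix.fromBlocks P Z 0 N₂))
    (hnn : ∀ i j, 0 ≤ A i j)
    (hN₁ : IsNilpotent N₁) (hN₂ : IsNilpotent N₂)
    (σ : Equiv.Perm (Fin b))
    (hP : P = Matrix.of fun i j => if σ i = j then (1 : ℤ) else 0)
    (hσ : ∀ i j : Fin b, ∃ k : ℕ, (σ ^ k) i = j)
    (i₀ : Fin b) :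
    ∃ nk : Fin c → ℕ,
      ∀ (x : Fin a → ℤ) (y : Fin b → ℤ) (z : Fin c → ℤ),
        (Submodule.Quotient.mk (Sum.elim x (Sum.elim y z)) :
            (Fin a ⊕ (Fin b ⊕ Fin c) → ℤ) ⧸ LinearMap.range ((1 - A).mulVecLin)) =
          ((∑ i, y i) + ∑ k, (nk k : ℤ) * z k) •
            Submodule.Quotient.mk (Pi.single (Sum.inr (Sum.inl i₀)) 1) := by
  obtain ⟨m₁, hm₁⟩ := hN₁
  obtain ⟨m₂, hm₂⟩ := hN₂
  set M := ∑ i ∈ Finset.range m₂, N₂ ^ i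
  have hP : P = σ.permMatrix ℤ := by
    ext i j
    simp [hP, PEquiv.toMatrix_apply]
  have hZM : ∀ j k, 0 ≤ (Z * M) j k := mul_apply_nonneg
    (fun i k => by simpa [hA] using hnn (.inr (.inl i)) (.inr (.inr k)))
    (geom_sum_apply_nonneg (fun i k => by simpa [hA] using hnn (.inr (.inr i)) (.inr (.inr k))) m₂)
  set w : Fin c → ℤ := 1 ᵥ* (Z * M)
  have hw : ∀ k, ((w k).toNat : ℤ) = w k := fun k => Int.toNat_of_nonneg <|
    show 0 ≤ ∑ j, (1 : Fin b → ℤ) j * (Z * M) j k from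
      Finset.sum_nonneg fun j _ => mul_nonneg zero_le_one (hZM j k)
  refine ⟨fun k => (w k).toNat, fun x y z => ?_⟩
  set s := (∑ i, y i) + ∑ k, ((w k).toNat : ℤ) * z k
  have hs : ∑ j, (y + Z *ᵥ (M *ᵥ z)) j = s := by
    rw [Finset.sum_congr rfl fun j _ => Pi.add_apply y _ j, Finset.sum_add_distrib,
      ← one_dotProduct (Z *ᵥ (M *ᵥ z)), mulVec_mulVec, dotProduct_mulVec]
    simp only [s, hw]
    rfl
  have hsplit : Sum.elim x (Sum.elim y z) - s • Pi.single (.inr (.inl i₀)) 1 =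
      Sum.elim x (Sum.elim (y - s • Pi.single i₀ 1) z) := by
    ext (i | i | i) <;> simp [Pi.single_apply]
  rw [← Submodule.Quotient.mk_smul, Submodule.Quotient.eq, hsplit, hA, hP]
  refine sumElim_mem_range_one_sub_fromBlocks_of_mem_right
    (one_sub_mul_geom_sum_of_pow_eq_zero hm₁) _ x <|
    sumElim_mem_range_one_sub_fromBlocks_of_mem_left Z (one_sub_mul_geom_sum_of_pow_eq_zero hm₂) z ?_
  convert sub_sum_smul_single_mem_range_one_sub_permMatrix hσ (y + Z *ᵥ (M *ᵥ z)) i₀ using 1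
  rw [hs]
  abel
end

section
/- Let A, A' be essentially cyclic nonnegative integer n×n matrices (each in the block form with nilpotent outer diagonal blocks and a single cyclic-permutation middle block), and suppose U(I−A)V = I−A' with U, V invertible integer matrices of determinant 1. If U is a nonnegative matrix, then the induced cokernel isomorphism [v] ↦ [Uv] from Z^n/(I−A)Z^n to Z^n/(I−A')Z^n sends the distinguished generator [e] (the class of a middle-block standard basis vector of A) to a nonnegative multiple of the distinguished generator [e'] of Z^n/(I−A')Z^n. -/
/-!
The isomorphism sends `[e]` to `[U e]`, and `U e` is a nonnegative vector, so it suffices that in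
the cokernel of `I - A'` the class of every nonnegative vector is a nonnegative multiple of `[e']`.
Modulo the image of `I - A'`: the top block vanishes because `I - N₁'` is invertible; the middle
basis vectors satisfy `e_{σ' j} ≡ e_j`, so all of them are `≡ e'` since `σ'` is a single cycle; and
a bottom vector `z` is `≡ (0, Z' w, 0)`, where `w = ∑ₖ N₂'ᵏ z` solves `(I - N₂') w = z` and is
nonnegative together with `z`.
-/

open Matrix

lemma Matrix.mulVec_nonneg {R m n : Type*} [Semiring R] [PartialOrder R] [IsOrderedRing R]
    [Fintype n] {M : Matrix m n R} (hM : ∀ i j, 0 ≤ M i j) {v : n → R} (hv : 0 ≤ v) :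
    0 ≤ M *ᵥ v :=
  fun i => Finset.sum_nonneg fun j _ => mul_nonneg (hM i j) (hv j)

lemma Matrix.pow_mulVec_nonneg {R n : Type*} [Semiring R] [PartialOrder R] [IsOrderedRing R]
    [Fintype n] [DecidableEq n] {N : Matrix n n R} (hN : ∀ i j, 0 ≤ N i j) {v : n → R}
    (hv : 0 ≤ v) (k : ℕ) : 0 ≤ (N ^ k) *ᵥ v := by
  induction k with
  | zero => simpa using hv
  | succ k ih => rw [pow_succ', ← mulVec_mulVec]; exact mulVec_nonneg hN ih

lemma Matrix.exists_one_sub_mulVec_eq_of_isNilpotent {R n : Type*} [Ring R] [Fintype n]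
    [DecidableEq n] {N : Matrix n n R} (hN : IsNilpotent N) (x : n → R) :
    ∃ w, (1 - N) *ᵥ w = x := by
  obtain ⟨u, hu⟩ := hN.isUnit_one_sub
  exact ⟨(↑u⁻¹ : Matrix n n R) *ᵥ x, by rw [← hu, mulVec_mulVec, Units.mul_inv, one_mulVec]⟩

lemma Matrix.exists_nonneg_one_sub_mulVec_eq_of_isNilpotent {R n : Type*} [Ring R]
    [PartialOrder R] [IsOrderedRing R] [Fintype n] [DecidableEq n] {N : Matrix n n R}
    (hN : IsNilpotent N) (hN₀ : ∀ i j, 0 ≤ N i j) {z : n → R} (hz : 0 ≤ z) :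
    ∃ w, 0 ≤ w ∧ (1 - N) *ᵥ w = z := by
  obtain ⟨m, hm⟩ := hN
  refine ⟨∑ k ∈ Finset.range m, N ^ k *ᵥ z,
    Finset.sum_nonneg fun k _ => pow_mulVec_nonneg hN₀ hz k, ?_⟩
  rw [← sum_mulVec, mulVec_mulVec, mul_neg_geom_sum, hm, sub_zero, one_mulVec]

lemma Equiv.Perm.permMatrix_eq_of {R n : Type*} [DecidableEq n] [Zero R] [One R]
    (σ : Equiv.Perm n) :
    σ.permMatrix R = of fun i j => if σ i = j then 1 else 0 := by
  ext i j
  simp [PEquiv.toMatrix_apply]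

lemma Equiv.Perm.apply_eq_apply_of_comp_eq_self {β M : Type*} {σ : Equiv.Perm β}
    (hσ : ∀ i j, ∃ k : ℕ, (σ ^ k) i = j) {f : β → M} (hf : f ∘ σ = f) (i j : β) :
    f j = f i := by
  obtain ⟨k, rfl⟩ := hσ i j
  rw [Equiv.Perm.coe_pow]
  exact congrFun (Function.iterate_invariant hf k) i

lemma AddSubmonoid.mem_of_nonneg_of_single_mem {ι : Type*} [Fintype ι] [DecidableEq ι]
    (S : AddSubmonoid (ι → ℤ)) {v : ι → ℤ} (hv : 0 ≤ v)
    (h : ∀ i, v i ≠ 0 → Pi.single i 1 ∈ S) : v ∈ S := by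
  rw [← Finset.univ_sum_single v]
  refine S.sum_mem fun i _ => ?_
  by_cases hi : v i = 0
  · simp [hi]
  · have hsingle : Pi.single i (v i) = (v i).toNat • (Pi.single i 1 : ι → ℤ) := by
      rw [← Pi.single_smul, nsmul_eq_mul, mul_one, Int.toNat_of_nonneg (hv i)]
    exact hsingle ▸ S.nsmul_mem (h i hi) _

def essCyclicBlock {R α β γ : Type*} [Zero R] (N₁ : Matrix α α R) (X : Matrix α β R)
    (Y : Matrix α γ R) (P : Matrix β β R) (Z : Matrix β γ R) (N₂ : Matrix γ γ R) :
    Matrix (α ⊕ (β ⊕ γ)) (α ⊕ (β ⊕ γ)) R :=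
  fromBlocks N₁ (fromCols X Y) 0 (fromBlocks P Z 0 N₂)

section EssentiallyCyclic

variable {R α β γ : Type*} [CommRing R] [Fintype α] [Fintype β] [Fintype γ]
  [DecidableEq α] [DecidableEq β] [DecidableEq γ]
  {N₁ : Matrix α α R} {X : Matrix α β R} {Y : Matrix α γ R} {P : Matrix β β R}
  {Z : Matrix β γ R} {N₂ : Matrix γ γ R}

lemma one_sub_essCyclicBlock_mulVec (x : α → R) (y : β → R) (z : γ → R) :
    (1 - essCyclicBlock N₁ X Y P Z N₂) *ᵥ Sum.elim x (Sum.elim y z) =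
      Sum.elim ((1 - N₁) *ᵥ x - (X *ᵥ y + Y *ᵥ z))
        (Sum.elim ((1 - P) *ᵥ y - Z *ᵥ z) ((1 - N₂) *ᵥ z)) := by
  simp only [sub_mulVec, one_mulVec, essCyclicBlock, fromBlocks_mulVec, fromCols_mulVec_sumElim,
    Sum.elim_comp_inl, Sum.elim_comp_inr, zero_mulVec, zero_add, ← Sum.elim_sub_sub, sub_sub]

lemma sumElim_zero_mem_range_one_sub_essCyclicBlock (hN₁ : IsNilpotent N₁) (x : α → R) :
    Sum.elim x 0 ∈ LinearMap.range (1 - essCyclicBlock N₁ X Y P Z N₂).mulVecLin := by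
  obtain ⟨w, hw⟩ := exists_one_sub_mulVec_eq_of_isNilpotent hN₁ x
  refine ⟨Sum.elim w 0, ?_⟩
  rw [mulVecLin_apply, ← Sum.elim_zero_zero, one_sub_essCyclicBlock_mulVec]
  simp [hw]

lemma single_perm_sub_single_mem_range_one_sub_essCyclicBlock (hN₁ : IsNilpotent N₁)
    (σ : Equiv.Perm β) (j : β) :
    Pi.single (Sum.inr (Sum.inl (σ j))) 1 - Pi.single (Sum.inr (Sum.inl j)) 1 ∈
      LinearMap.range (1 - essCyclicBlock N₁ X Y (σ.permMatrix R) Z N₂).mulVecLin := by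
  have hPe : σ.permMatrix R *ᵥ Pi.single (σ j) 1 = Pi.single j 1 := by
    rw [PEquiv.toMatrix_toPEquiv_mulVec, Pi.single_comp_equiv, Equiv.symm_apply_apply]
  set e : β → R := Pi.single (σ j) 1
  have himage : (1 - essCyclicBlock N₁ X Y (σ.permMatrix R) Z N₂) *ᵥ Sum.elim 0 (Sum.elim e 0) =
      Pi.single (Sum.inr (Sum.inl (σ j))) 1 - Pi.single (Sum.inr (Sum.inl j)) 1 -
        Sum.elim (X *ᵥ e) 0 := by
    rw [one_sub_essCyclicBlock_mulVec, sub_mulVec (1 : Matrix β β R), hPe]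
    ext (i | i | i) <;> simp [e, Pi.single_apply, one_apply, eq_comm]
  rw [← sub_add_cancel (_ - _) (Sum.elim (X *ᵥ e) 0), ← himage]
  exact add_mem ⟨_, rfl⟩ (sumElim_zero_mem_range_one_sub_essCyclicBlock hN₁ _)

lemma exists_nonneg_sumElim_sub_mem_range_one_sub_essCyclicBlock [PartialOrder R]
    [IsOrderedRing R] (hN₁ : IsNilpotent N₁) (hN₂ : IsNilpotent N₂) (hN₂₀ : ∀ i j, 0 ≤ N₂ i j)
    {z : γ → R} (hz : 0 ≤ z) :
    ∃ w : γ → R, 0 ≤ w ∧ (Sum.elim 0 (Sum.elim 0 z) : α ⊕ (β ⊕ γ) → R) -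
      (Sum.elim 0 (Sum.elim (Z *ᵥ w) 0) : α ⊕ (β ⊕ γ) → R) ∈
      LinearMap.range (1 - essCyclicBlock N₁ X Y P Z N₂).mulVecLin := by
  obtain ⟨w, hw₀, hw⟩ := exists_nonneg_one_sub_mulVec_eq_of_isNilpotent hN₂ hN₂₀ hz
  refine ⟨w, hw₀, ?_⟩
  have himage : (1 - essCyclicBlock N₁ X Y P Z N₂) *ᵥ Sum.elim 0 (Sum.elim 0 w) =
      (Sum.elim 0 (Sum.elim 0 z) : α ⊕ (β ⊕ γ) → R) -
      (Sum.elim 0 (Sum.elim (Z *ᵥ w) 0) : α ⊕ (β ⊕ γ) → R) - Sum.elim (Y *ᵥ w) 0 := by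
    rw [one_sub_essCyclicBlock_mulVec, hw]
    ext (i | i | i) <;> simp
  rw [← sub_add_cancel (_ - _) (Sum.elim (Y *ᵥ w) 0), ← himage]
  exact add_mem ⟨_, rfl⟩ (sumElim_zero_mem_range_one_sub_essCyclicBlock hN₁ _)

end EssentiallyCyclic

theorem essCyclicBlock_exists_mk_eq_natCast_smul_of_nonneg {α β γ : Type*}
    [Fintype α] [Fintype β] [Fintype γ] [DecidableEq α] [DecidableEq β] [DecidableEq γ]
    {N₁ : Matrix α α ℤ} {X : Matrix α β ℤ} {Y : Matrix α γ ℤ} {Z : Matrix β γ ℤ}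
    {N₂ : Matrix γ γ ℤ} {σ : Equiv.Perm β}
    (hN₁ : IsNilpotent N₁) (hN₂ : IsNilpotent N₂) (hN₂₀ : ∀ i j, 0 ≤ N₂ i j)
    (hZ₀ : ∀ i j, 0 ≤ Z i j) (hσ : ∀ i j, ∃ k : ℕ, (σ ^ k) i = j) (i₀ : β)
    {v : α ⊕ (β ⊕ γ) → ℤ} (hv : 0 ≤ v) :
    ∃ d : ℕ, Submodule.Quotient.mk
        (p := LinearMap.range (1 - essCyclicBlock N₁ X Y (σ.permMatrix ℤ) Z N₂).mulVecLin) v =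
      (d : ℤ) • Submodule.Quotient.mk (Pi.single (Sum.inr (Sum.inl i₀)) 1) := by
  set K := LinearMap.range (1 - essCyclicBlock N₁ X Y (σ.permMatrix ℤ) Z N₂).mulVecLin
  set e : β → α ⊕ (β ⊕ γ) → ℤ := fun j => Pi.single (Sum.inr (Sum.inl j)) 1
  let C := (AddSubmonoid.multiples (K.mkQ (e i₀))).comap K.mkQ.toAddMonoidHom
  have mem_C {u} : u ∈ C ↔
      ∃ d : ℕ, (Submodule.Quotient.mk u : _ ⧸ K) = (d : ℤ) • Submodule.Quotient.mk (e i₀) := by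
    simp [C, AddSubmonoid.mem_multiples_iff, eq_comm]
  have mem_C_of_sub_mem {u u'} (h : u - u' ∈ K) (hu' : u' ∈ C) : u ∈ C := by
    rwa [mem_C, (Submodule.Quotient.eq K).2 h, ← mem_C]
  have top (k : α) : Pi.single (Sum.inl k) 1 ∈ C := by
    refine mem_C_of_sub_mem ?_ C.zero_mem
    rw [sub_zero, ← Sum.elim_single_zero]
    exact sumElim_zero_mem_range_one_sub_essCyclicBlock hN₁ _
  have mid (j : β) : e j ∈ C := by
    refine mem_C.2 ⟨1, ?_⟩
    simpa using Equiv.Perm.apply_eq_apply_of_comp_eq_self hσ (f := fun j => K.mkQ (e j))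
      (funext fun j => (Submodule.Quotient.eq K).2
        (single_perm_sub_single_mem_range_one_sub_essCyclicBlock hN₁ σ j)) i₀ j
  have mid_block {y : β → ℤ} (hy : 0 ≤ y) :
      (Sum.elim 0 (Sum.elim y 0) : α ⊕ (β ⊕ γ) → ℤ) ∈ C := by
    refine C.mem_of_nonneg_of_single_mem ?_ fun i hi => ?_
    · rintro (i | i | i)
      exacts [le_rfl, hy i, le_rfl]
    · rcases i with i | i | i <;> simp_all [e]
  have bot (k : γ) : Pi.single (Sum.inr (Sum.inr k)) 1 ∈ C := by
    obtain ⟨w, hw₀, hw⟩ := exists_nonneg_sumElim_sub_mem_range_one_sub_essCyclicBlock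
      (X := X) (Y := Y) (P := σ.permMatrix ℤ) (Z := Z) hN₁ hN₂ hN₂₀ (z := Pi.single k 1)
      (Pi.single_nonneg.2 zero_le_one)
    rw [Sum.elim_zero_single, Sum.elim_zero_single] at hw
    exact mem_C_of_sub_mem hw (mid_block (mulVec_nonneg hZ₀ hw₀))
  exact mem_C.1 <| C.mem_of_nonneg_of_single_mem hv fun i _ => by
    rcases i with k | j | k
    exacts [top k, mid j, bot k]

theorem esscyclic_nonneg_equivalence_positive_general (a b c : ℕ)
    (N₁' : Matrix (Fin a) (Fin a) ℤ) (X' : Matrix (Fin a) (Fin b) ℤ)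
    (Y' : Matrix (Fin a) (Fin c) ℤ) (P' : Matrix (Fin b) (Fin b) ℤ)
    (Z' : Matrix (Fin b) (Fin c) ℤ) (N₂' : Matrix (Fin c) (Fin c) ℤ)
    (A' : Matrix (Fin a ⊕ (Fin b ⊕ Fin c)) (Fin a ⊕ (Fin b ⊕ Fin c)) ℤ)
    (hA' : A' = Matrix.fromBlocks N₁' (Matrix.fromCols X' Y') 0
      (Matrix.fromBlocks P' Z' 0 N₂'))
    (hnn' : ∀ i j, 0 ≤ A' i j)
    (hN₁' : IsNilpotent N₁') (hN₂' : IsNilpotent N₂')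
    (σ' : Equiv.Perm (Fin b))
    (hP' : P' = Matrix.of fun i j => if σ' i = j then (1 : ℤ) else 0)
    (hσ' : ∀ i j : Fin b, ∃ k : ℕ, (σ' ^ k) i = j)
    (U : Matrix (Fin a ⊕ (Fin b ⊕ Fin c)) (Fin a ⊕ (Fin b ⊕ Fin c)) ℤ)
    (hUnn : ∀ i j, 0 ≤ U i j)
    (i₀ i₀' : Fin b) :
    ∃ d : ℕ,
      (Submodule.Quotient.mk (U.mulVec (Pi.single (Sum.inr (Sum.inl i₀)) 1)) :
          (Fin a ⊕ (Fin b ⊕ Fin c) → ℤ) ⧸ LinearMap.range ((1 - A').mulVecLin)) =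
        (d : ℤ) • Submodule.Quotient.mk (Pi.single (Sum.inr (Sum.inl i₀')) 1) := by
  subst hA' hP'
  rw [← Equiv.Perm.permMatrix_eq_of] at hnn' ⊢
  have hN₂'₀ (i j : Fin c) : 0 ≤ N₂' i j := by
    simpa using hnn' (Sum.inr (Sum.inr i)) (Sum.inr (Sum.inr j))
  have hZ'₀ (i : Fin b) (j : Fin c) : 0 ≤ Z' i j := by
    simpa using hnn' (Sum.inr (Sum.inl i)) (Sum.inr (Sum.inr j))
  have hUe₀ : 0 ≤ U *ᵥ Pi.single (Sum.inr (Sum.inl i₀)) 1 := by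
    rw [mulVec_single_one]
    exact fun i => hUnn i _
  exact essCyclicBlock_exists_mk_eq_natCast_smul_of_nonneg hN₁' hN₂' hN₂'₀ hZ'₀ hσ' i₀' hUe₀

/-- a determinant-1 equivalence `U(I−A)V = I−A'` between essentially
cyclic nonnegative integer matrices with `U` nonnegative induces a positive
cokernel isomorphism: the class of `U·e` is a nonnegative multiple of the
distinguished generator `[e']`. -/
theorem esscyclic_nonneg_equivalence_positive (a b c : ℕ)
    (N₁ : Matrix (Fin a) (Fin a) ℤ) (X : Matrix (Fin a) (Fin b) ℤ)
    (Y : Matrix (Fin a) (Fin c) ℤ) (P : Matrix (Fin b) (Fin b) ℤ)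
    (Z : Matrix (Fin b) (Fin c) ℤ) (N₂ : Matrix (Fin c) (Fin c) ℤ)
    (N₁' : Matrix (Fin a) (Fin a) ℤ) (X' : Matrix (Fin a) (Fin b) ℤ)
    (Y' : Matrix (Fin a) (Fin c) ℤ) (P' : Matrix (Fin b) (Fin b) ℤ)
    (Z' : Matrix (Fin b) (Fin c) ℤ) (N₂' : Matrix (Fin c) (Fin c) ℤ)
    (A A' : Matrix (Fin a ⊕ (Fin b ⊕ Fin c)) (Fin a ⊕ (Fin b ⊕ Fin c)) ℤ)
    (hA : A = Matrix.fromBlocks N₁ (Matrix.fromCols X Y) 0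
      (Matrix.fromBlocks P Z 0 N₂))
    (hA' : A' = Matrix.fromBlocks N₁' (Matrix.fromCols X' Y') 0
      (Matrix.fromBlocks P' Z' 0 N₂'))
    (hnn : ∀ i j, 0 ≤ A i j) (hnn' : ∀ i j, 0 ≤ A' i j)
    (hN₁ : IsNilpotent N₁) (hN₂ : IsNilpotent N₂)
    (hN₁' : IsNilpotent N₁') (hN₂' : IsNilpotent N₂')
    (σ σ' : Equiv.Perm (Fin b))
    (hP : P = Matrix.of fun i j => if σ i = j then (1 : ℤ) else 0)
    (hP' : P' = Matrix.of fun i j => if σ' i = j then (1 : ℤ) else 0)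
    (hσ : ∀ i j : Fin b, ∃ k : ℕ, (σ ^ k) i = j)
    (hσ' : ∀ i j : Fin b, ∃ k : ℕ, (σ' ^ k) i = j)
    (U V : Matrix (Fin a ⊕ (Fin b ⊕ Fin c)) (Fin a ⊕ (Fin b ⊕ Fin c)) ℤ)
    (hU : U.det = 1) (hV : V.det = 1)
    (hUV : U * (1 - A) * V = 1 - A')
    (hUnn : ∀ i j, 0 ≤ U i j)
    (i₀ i₀' : Fin b) :
    ∃ d : ℕ,
      (Submodule.Quotient.mk (U.mulVec (Pi.single (Sum.inr (Sum.inl i₀)) 1)) :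
          (Fin a ⊕ (Fin b ⊕ Fin c) → ℤ) ⧸ LinearMap.range ((1 - A').mulVecLin)) =
        (d : ℤ) • Submodule.Quotient.mk (Pi.single (Sum.inr (Sum.inl i₀')) 1) :=
  esscyclic_nonneg_equivalence_positive_general a b c N₁' X' Y' P' Z' N₂' A' hA' hnn' hN₁' hN₂' σ'
    hP' hσ' U hUnn i₀ i₀'
end

section
/- Let A (n×n) and B (m×m) be integer matrices that are shift equivalent over Z via (R₀, S) with lag ℓ. Setting t = 1 in the PSE equation yields the identity [[1, 0],[S, 1]] · [[1, -R₀],[0, 1]] · [[I−A, 0],[0, 1]] · [[W, R₀],[-S, I−B]] = [[1, 0],[0, I−B]] over Z, where W = I + A + ⋯ + A^(ℓ−1); moreover det([[W, R₀],[-S, I−B]]) = 1. -/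
/-!
The block identity is a direct computation from `(1 - A)(1 + A + ⋯ + A^(ℓ-1)) = 1 - A^ℓ = 1 - R₀S`
and `AR₀ = R₀B`. Taking determinants in the same identity for the shift equivalence
`(tA, tB, t^ℓR₀, S)` over `K[t]` gives `det(1 - tA) · det M(t) = det(1 - tB)` for
`M(t) = [[∑ (tA)^i, t^ℓR₀], [-S, 1 - tB]]`, and the shift equivalence from `B` to `A` gives
`det(1 - tB) · det M'(t) = det(1 - tA)`. Since `det(1 - tA)` has constant term `1`, `det M(t)` is a
unit of `K[t]`, hence the constant `det M(0) = 1`; now set `t = 1`.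
-/

open Matrix Polynomial Finset

variable {R : Type*} {ι κ : Type*} [Fintype ι] [DecidableEq ι] [Fintype κ] [DecidableEq κ]

structure IsShiftEquivalence [Semiring R] (ℓ : ℕ) (A : Matrix ι ι R) (B : Matrix κ κ R)
    (R₀ : Matrix ι κ R) (S : Matrix κ ι R) : Prop where
  pow_eq_left : A ^ ℓ = R₀ * S
  pow_eq_right : B ^ ℓ = S * R₀
  intertwine_left : A * R₀ = R₀ * B
  intertwine_right : S * A = B * S

namespace IsShiftEquivalence

section Semiring

variable [Semiring R] {ℓ : ℕ} {A : Matrix ι ι R} {B : Matrix κ κ R} {R₀ : Matrix ι κ R}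
  {S : Matrix κ ι R}

theorem symm (h : IsShiftEquivalence ℓ A B R₀ S) : IsShiftEquivalence ℓ B A S R₀ :=
  ⟨h.pow_eq_right, h.pow_eq_left, h.intertwine_right.symm, h.intertwine_left.symm⟩

theorem map {R' : Type*} [Semiring R'] (h : IsShiftEquivalence ℓ A B R₀ S) (f : R →+* R') :
    IsShiftEquivalence ℓ (A.map f) (B.map f) (R₀.map f) (S.map f) := by
  constructor <;> simp only [← Matrix.map_pow, ← Matrix.map_mul, h.pow_eq_left, h.pow_eq_right,
    h.intertwine_left, h.intertwine_right]

end Semiring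

theorem smul [CommSemiring R] {ℓ : ℕ} {A : Matrix ι ι R} {B : Matrix κ κ R} {R₀ : Matrix ι κ R}
    {S : Matrix κ ι R} (h : IsShiftEquivalence ℓ A B R₀ S) (t : R) :
    IsShiftEquivalence ℓ (t • A) (t • B) (t ^ ℓ • R₀) S := by
  constructor
  · rw [_root_.smul_pow, h.pow_eq_left, Matrix.smul_mul]
  · rw [_root_.smul_pow, h.pow_eq_right, Matrix.mul_smul]
  · rw [Matrix.smul_mul, Matrix.mul_smul, h.intertwine_left, Matrix.smul_mul, Matrix.mul_smul,
      smul_smul, smul_smul, mul_comm]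
  · rw [Matrix.mul_smul, Matrix.smul_mul, h.intertwine_right]

end IsShiftEquivalence

def shiftEquivMatrix [Ring R] (ℓ : ℕ) (x : Matrix ι ι R) (r : Matrix ι κ R) (s : Matrix κ ι R)
    (y : Matrix κ κ R) : Matrix (ι ⊕ κ) (ι ⊕ κ) R :=
  fromBlocks (∑ i ∈ range ℓ, x ^ i) r (-s) (1 - y)

section Ring

variable [Ring R] {ℓ : ℕ} {x : Matrix ι ι R} {y : Matrix κ κ R} {r : Matrix ι κ R}
  {s : Matrix κ ι R}

theorem fromBlocks_mul_shiftEquivMatrix (hx : x ^ ℓ = r * s) (hxr : x * r = r * y) :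
    fromBlocks 1 0 s 1 * fromBlocks 1 (-r) 0 1 * fromBlocks (1 - x) 0 0 1 *
      shiftEquivMatrix ℓ x r s y = fromBlocks 1 0 0 (1 - y) := by
  have hgeom : (1 - x) * ∑ i ∈ range ℓ, x ^ i = 1 - x ^ ℓ := by
    rw [← neg_sub x 1, Matrix.neg_mul, mul_geom_sum, neg_sub]
  simp only [shiftEquivMatrix, fromBlocks_multiply, Matrix.mul_one, Matrix.one_mul,
    Matrix.mul_zero, add_zero, zero_add, Matrix.neg_mul, Matrix.mul_neg, neg_neg]
  congr 1
  · rw [hgeom, hx, sub_add_cancel]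
  · simp only [Matrix.sub_mul, Matrix.mul_sub, Matrix.one_mul, Matrix.mul_one, hxr]
    abel
  · rw [Matrix.mul_assoc, hgeom, hx]
    simp only [Matrix.mul_sub, Matrix.add_mul, Matrix.neg_mul, Matrix.one_mul, Matrix.mul_one,
      Matrix.mul_assoc]
    abel
  · simp only [Matrix.mul_sub, Matrix.sub_mul, Matrix.add_mul, Matrix.neg_mul, Matrix.one_mul,
      Matrix.mul_one, hxr, Matrix.mul_assoc]
    abel


theorem shiftEquivMatrix_map {R' : Type*} [Ring R'] (f : R →+* R') :
    (shiftEquivMatrix ℓ x r s y).map f =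
      shiftEquivMatrix ℓ (x.map f) (r.map f) (s.map f) (y.map f) := by
  rw [shiftEquivMatrix, shiftEquivMatrix, fromBlocks_map, Matrix.map_neg _ (map_neg f)]
  simp only [← RingHom.mapMatrix_apply, map_sum, map_pow, map_sub, map_one]

end Ring

section CommRing

variable [CommRing R] {ℓ : ℕ} {x : Matrix ι ι R} {y : Matrix κ κ R} {r : Matrix ι κ R}
  {s : Matrix κ ι R}

theorem det_one_sub_mul_det_shiftEquivMatrix (hx : x ^ ℓ = r * s) (hxr : x * r = r * y) :
    (1 - x).det * (shiftEquivMatrix ℓ x r s y).det = (1 - y).det := by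
  simpa [det_mul, det_fromBlocks_zero₂₁, det_fromBlocks_zero₁₂] using
    congrArg det (fromBlocks_mul_shiftEquivMatrix hx hxr)

theorem det_shiftEquivMatrix_zero (hℓ : 0 < ℓ) :
    (shiftEquivMatrix ℓ (0 : Matrix ι ι R) 0 s (0 : Matrix κ κ R)).det = 1 := by
  obtain ⟨k, rfl⟩ := Nat.exists_eq_add_one_of_ne_zero hℓ.ne'
  simp [shiftEquivMatrix, sum_range_succ']

end CommRing

section Polynomial

variable {K : Type*} [CommRing K]

noncomputable def shiftEquivMatrixPoly (ℓ : ℕ) (A : Matrix ι ι K) (R₀ : Matrix ι κ K)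
    (S : Matrix κ ι K) (B : Matrix κ κ K) : Matrix (ι ⊕ κ) (ι ⊕ κ) K[X] :=
  shiftEquivMatrix ℓ ((X : K[X]) • A.map C) ((X : K[X]) ^ ℓ • R₀.map C) (S.map C)
    ((X : K[X]) • B.map C)

variable {ℓ : ℕ} {A : Matrix ι ι K} {B : Matrix κ κ K} {R₀ : Matrix ι κ K} {S : Matrix κ ι K}

theorem map_eval_smul_map_C {μ ν : Type*} (c : K) (p : K[X]) (M : Matrix μ ν K) :
    (p • M.map C).map (eval c) = p.eval c • M := by
  ext i j
  simp

theorem eval_det_shiftEquivMatrixPoly (c : K) :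
    (shiftEquivMatrixPoly ℓ A R₀ S B).det.eval c =
      (shiftEquivMatrix ℓ (c • A) (c ^ ℓ • R₀) S (c • B)).det := by
  rw [shiftEquivMatrixPoly, ← coe_evalRingHom, RingHom.map_det, RingHom.mapMatrix_apply,
    shiftEquivMatrix_map]
  simp [map_eval_smul_map_C, Function.comp_def]

theorem charpolyRev_mul_det_shiftEquivMatrixPoly (h : IsShiftEquivalence ℓ A B R₀ S) :
    A.charpolyRev * (shiftEquivMatrixPoly ℓ A R₀ S B).det = B.charpolyRev :=
  have h' := (h.map C).smul (X : K[X])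
  det_one_sub_mul_det_shiftEquivMatrix h'.pow_eq_left h'.intertwine_left

theorem det_shiftEquivMatrixPoly [IsDomain K] (hℓ : 0 < ℓ) (h : IsShiftEquivalence ℓ A B R₀ S) :
    (shiftEquivMatrixPoly ℓ A R₀ S B).det = 1 := by
  have hA := charpolyRev_mul_det_shiftEquivMatrixPoly h
  have hB := charpolyRev_mul_det_shiftEquivMatrixPoly h.symm
  have hA0 : A.charpolyRev ≠ 0 := fun h0 ↦ by simpa [h0] using A.eval_charpolyRev
  have hunit : IsUnit (shiftEquivMatrixPoly ℓ A R₀ S B).det :=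
    IsUnit.of_mul_eq_one _ (mul_left_cancel₀ hA0 (by rw [← mul_assoc, hA, hB, mul_one]))
  rw [eq_C_of_natDegree_eq_zero (natDegree_eq_zero_of_isUnit hunit), coeff_zero_eq_eval_zero,
    eval_det_shiftEquivMatrixPoly, zero_pow hℓ.ne', zero_smul, zero_smul, zero_smul,
    det_shiftEquivMatrix_zero hℓ, map_one]

theorem det_shiftEquivMatrix_eq_one [IsDomain K] (hℓ : 0 < ℓ)
    (h : IsShiftEquivalence ℓ A B R₀ S) : (shiftEquivMatrix ℓ A R₀ S B).det = 1 := by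
  have h1 := congrArg (eval 1) (det_shiftEquivMatrixPoly hℓ h)
  rwa [eval_det_shiftEquivMatrixPoly, one_pow, one_smul, one_smul, one_smul, eval_one] at h1

end Polynomial

/-- setting `t = 1` in the PSE equation gives a stabilized integer
matrix equivalence between `I−A` and `I−B`, with the intertwining matrix having
determinant 1. -/
theorem pse_at_one (n m ℓ : ℕ) (hℓ : 0 < ℓ)
    (A : Matrix (Fin n) (Fin n) ℤ) (B : Matrix (Fin m) (Fin m) ℤ)
    (R₀ : Matrix (Fin n) (Fin m) ℤ) (S : Matrix (Fin m) (Fin n) ℤ)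
    (h1 : A ^ ℓ = R₀ * S) (h2 : B ^ ℓ = S * R₀)
    (h3 : A * R₀ = R₀ * B) (h4 : S * A = B * S) :
    let W : Matrix (Fin n) (Fin n) ℤ := ∑ i ∈ Finset.range ℓ, A ^ i
    Matrix.fromBlocks 1 0 S 1 * Matrix.fromBlocks 1 (-R₀) 0 1 *
        Matrix.fromBlocks (1 - A) 0 0 1 *
        Matrix.fromBlocks W R₀ (-S) (1 - B) =
      Matrix.fromBlocks 1 0 0 (1 - B) ∧
    (Matrix.fromBlocks W R₀ (-S) (1 - B)).det = 1 :=
  ⟨fromBlocks_mul_shiftEquivMatrix h1 h3, det_shiftEquivMatrix_eq_one hℓ ⟨h1, h2, h3, h4⟩⟩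
end

section
/- Let A be a square nonnegative integer matrix with poset of irreducible components P^A, and suppose (R₀, S) gives a lag-ℓ shift equivalence over Z≥0 from A to a square nonnegative integer matrix B, where every diagonal block of A and B is irreducible. For each irreducible component p of A there is a unique irreducible component q of B such that the (p,q)-block of R₀ times the (q,p)-block of S is nonzero, and then (A^ℓ){p,p} = R₀{p,q}·S{q,p} and (B^ℓ){q,q} = S{q,p}·R₀{p,q}. -/
open Matrix

section Helpers
variable {m n o : Type*} [Fintype n]

lemma aux_mul_nonneg (M : Matrix m n ℤ) (N : Matrix n o ℤ)
    (hM : ∀ i j, 0 ≤ M i j) (hN : ∀ i j, 0 ≤ N i j) (i : m) (j : o) :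
    0 ≤ (M * N) i j := by
  rw [Matrix.mul_apply]
  exact Finset.sum_nonneg fun k _ => mul_nonneg (hM i k) (hN k j)

lemma aux_mul_ne (M : Matrix m n ℤ) (N : Matrix n o ℤ) {i : m} {j : o}
    (h : (M * N) i j ≠ 0) : ∃ k, M i k ≠ 0 ∧ N k j ≠ 0 := by
  rw [Matrix.mul_apply] at h
  obtain ⟨k, _, hk⟩ := Finset.exists_ne_zero_of_sum_ne_zero h
  exact ⟨k, mul_ne_zero_iff.mp hk⟩

lemma aux_mul_ne_of (M : Matrix m n ℤ) (N : Matrix n o ℤ)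
    (hM : ∀ i j, 0 ≤ M i j) (hN : ∀ i j, 0 ≤ N i j) {i : m} {k : n} {j : o}
    (h1 : M i k ≠ 0) (h2 : N k j ≠ 0) : (M * N) i j ≠ 0 := by
  rw [Matrix.mul_apply]
  have hpos : 0 < ∑ l, M i l * N l j :=
    Finset.sum_pos' (fun l _ => mul_nonneg (hM i l) (hN l j))
      ⟨k, Finset.mem_univ k,
        lt_of_le_of_ne (mul_nonneg (hM i k) (hN k j)) (Ne.symm (mul_ne_zero h1 h2))⟩
  exact hpos.ne'

lemma aux_pow_nonneg [DecidableEq n] (M : Matrix n n ℤ) (hM : ∀ i j, 0 ≤ M i j) :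
    ∀ (k : ℕ) (i j : n), 0 ≤ (M ^ k) i j := by
  intro k
  induction k with
  | zero => intro i j; rw [pow_zero]; by_cases h : i = j <;> simp [Matrix.one_apply, h]
  | succ k ih =>
    intro i j
    rw [pow_succ]
    exact aux_mul_nonneg _ _ ih hM i j

lemma aux_pow_tri [DecidableEq n] {P : Type*} [Preorder P] (M : Matrix n n ℤ) (π : n → P)
    (htri : ∀ i j, M i j ≠ 0 → π i ≤ π j) :
    ∀ (k : ℕ) (i j : n), (M ^ k) i j ≠ 0 → π i ≤ π j := by
  intro k
  induction k with
  | zero =>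
    intro i j h
    rw [pow_zero] at h
    by_cases hij : i = j
    · exact hij ▸ le_refl _
    · simp [Matrix.one_apply, hij] at h
  | succ k ih =>
    intro i j h
    rw [pow_succ] at h
    obtain ⟨l, h1, h2⟩ := aux_mul_ne _ _ h
    exact (ih i l h1).trans (htri l j h2)

lemma aux_diag_pow_ne [DecidableEq n] (M : Matrix n n ℤ) (hM : ∀ i j, 0 ≤ M i j)
    {i : n} (h : M i i ≠ 0) : ∀ m : ℕ, (M ^ m) i i ≠ 0 := by
  intro m
  induction m with
  | zero => simp
  | succ m ih =>
    rw [pow_succ]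
    exact aux_mul_ne_of _ _ (aux_pow_nonneg M hM m) hM ih h

end Helpers

/-- given a nonnegative lag-ℓ shift equivalence `(R₀, S)` between
block upper-triangular nonnegative integer matrices `A`, `B` all of whose
diagonal blocks are irreducible, each irreducible component `p` of `A` is matched
to a unique component `q` of `B` with `R₀{p,q}·S{q,p} ≠ 0`, and then
`(A^ℓ){p,p} = R₀{p,q}·S{q,p}` and `(B^ℓ){q,q} = S{q,p}·R₀{p,q}`. -/
theorem component_matching_of_shiftEquiv
    (ιA ιB PA PB : Type*) [Fintype ιA] [Fintype ιB] [DecidableEq ιA] [DecidableEq ιB]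
    [DecidableEq PA] [DecidableEq PB] [PartialOrder PA] [PartialOrder PB]
    (πA : ιA → PA) (πB : ιB → PB)
    (hπA : Function.Surjective πA) (hπB : Function.Surjective πB)
    (A : Matrix ιA ιA ℤ) (B : Matrix ιB ιB ℤ)
    (R₀ : Matrix ιA ιB ℤ) (S : Matrix ιB ιA ℤ) (ℓ : ℕ) (hℓ : 0 < ℓ)
    (hAnn : ∀ i j, 0 ≤ A i j) (hBnn : ∀ i j, 0 ≤ B i j)
    (hRnn : ∀ i j, 0 ≤ R₀ i j) (hSnn : ∀ i j, 0 ≤ S i j)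
    (hAtri : ∀ i j, A i j ≠ 0 → πA i ≤ πA j)
    (hBtri : ∀ i j, B i j ≠ 0 → πB i ≤ πB j)
    (hAirr : ∀ i j : ιA, πA i = πA j → ∃ k : ℕ, 0 < k ∧ 0 < (A ^ k) i j)
    (hBirr : ∀ i j : ιB, πB i = πB j → ∃ k : ℕ, 0 < k ∧ 0 < (B ^ k) i j)
    (h1 : A ^ ℓ = R₀ * S) (h2 : B ^ ℓ = S * R₀)
    (h3 : A * R₀ = R₀ * B) (h4 : S * A = B * S) :
    -- the block of `R₀·S` through components `p`,`q` is nonzero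
    let blockNonzero : PA → PB → Prop := fun p q =>
      ∃ i i' : ιA, πA i = p ∧ πA i' = p ∧
        (∑ j ∈ Finset.univ.filter (fun j => πB j = q), R₀ i j * S j i') ≠ 0
    (∀ p : PA, ∃! q : PB, blockNonzero p q) ∧
    ∀ p q, blockNonzero p q →
      (∀ i i' : ιA, πA i = p → πA i' = p →
        (A ^ ℓ) i i' = ∑ j ∈ Finset.univ.filter (fun j => πB j = q), R₀ i j * S j i') ∧
      (∀ j j' : ιB, πB j = q → πB j' = q →
        (B ^ ℓ) j j' = ∑ i ∈ Finset.univ.filter (fun i => πA i = p), S j i * R₀ i j') := by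
  intro blockNonzero
  -- intertwining for powers
  have hSA : ∀ k : ℕ, S * A ^ k = B ^ k * S := by
    intro k
    induction k with
    | zero => simp
    | succ k ih =>
      rw [pow_succ, ← Matrix.mul_assoc, ih, Matrix.mul_assoc, h4, pow_succ,
        Matrix.mul_assoc]
  have hAR : ∀ k : ℕ, A ^ k * R₀ = R₀ * B ^ k := by
    intro k
    induction k with
    | zero => simp
    | succ k ih =>
      rw [pow_succ, Matrix.mul_assoc, h3, ← Matrix.mul_assoc, ih, Matrix.mul_assoc,
        ← pow_succ]
  -- key lemma 1
  have KL1 : ∀ {i' i₂ : ιA} {j j₂ : ιB}, πA i' = πA i₂ → S j i' ≠ 0 → R₀ i₂ j₂ ≠ 0 →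
      πB j ≤ πB j₂ := by
    intro i' i₂ j j₂ hp hS hR
    obtain ⟨k, -, hk⟩ := hAirr i' i₂ hp
    have hne : (S * A ^ k) j i₂ ≠ 0 :=
      aux_mul_ne_of S (A ^ k) hSnn (aux_pow_nonneg A hAnn k) hS hk.ne'
    rw [hSA k] at hne
    obtain ⟨j₃, hB3, hS3⟩ := aux_mul_ne _ _ hne
    have hle1 : πB j ≤ πB j₃ := aux_pow_tri B πB hBtri k j j₃ hB3
    have hne2 : (S * R₀) j₃ j₂ ≠ 0 := aux_mul_ne_of S R₀ hSnn hRnn hS3 hR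
    rw [← h2] at hne2
    exact hle1.trans (aux_pow_tri B πB hBtri ℓ j₃ j₂ hne2)
  -- key lemma 2
  have KL2 : ∀ {j j' : ιB} {i i' : ιA}, πB j = πB j' → R₀ i j ≠ 0 → S j' i' ≠ 0 →
      πA i ≤ πA i' := by
    intro j j' i i' hq hR hS
    obtain ⟨k, -, hk⟩ := hBirr j j' hq
    have hne : (R₀ * B ^ k) i j' ≠ 0 :=
      aux_mul_ne_of R₀ (B ^ k) hRnn (aux_pow_nonneg B hBnn k) hR hk.ne'
    rw [← hAR k] at hne
    obtain ⟨i₃, hA3, hR3⟩ := aux_mul_ne _ _ hne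
    have hle1 : πA i ≤ πA i₃ := aux_pow_tri A πA hAtri k i i₃ hA3
    have hne2 : (R₀ * S) i₃ i' ≠ 0 := aux_mul_ne_of R₀ S hRnn hSnn hR3 hS
    rw [← h1] at hne2
    exact hle1.trans (aux_pow_tri A πA hAtri ℓ i₃ i' hne2)
  -- a witness for each component p : indices i, i' in p and j with R₀ i j ≠ 0, S j i' ≠ 0
  have witness : ∀ p : PA, ∃ (i i' : ιA) (j : ιB),
      πA i = p ∧ πA i' = p ∧ R₀ i j ≠ 0 ∧ S j i' ≠ 0 := by
    intro p
    obtain ⟨i, rfl⟩ := hπA p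
    obtain ⟨k, hkpos, hk⟩ := hAirr i i rfl
    have hdiag : ((A ^ k) ^ ℓ) i i ≠ 0 :=
      aux_diag_pow_ne (A ^ k) (aux_pow_nonneg A hAnn k) hk.ne' ℓ
    have hre : (A ^ k) ^ ℓ = A ^ ℓ * (A ^ ℓ) ^ (k - 1) := by
      obtain ⟨k', rfl⟩ : ∃ k', k = k' + 1 := ⟨k - 1, by omega⟩
      rw [Nat.add_sub_cancel, ← pow_mul, ← pow_mul, ← pow_add]
      congr 1
      ring
    rw [hre] at hdiag
    obtain ⟨i', hAi', hrest⟩ := aux_mul_ne _ _ hdiag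
    have hle1 : πA i ≤ πA i' := aux_pow_tri A πA hAtri ℓ i i' hAi'
    have hle2 : πA i' ≤ πA i := by
      rw [← pow_mul] at hrest
      exact aux_pow_tri A πA hAtri (ℓ * (k - 1)) i' i hrest
    have hpi' : πA i' = πA i := le_antisymm hle2 hle1
    rw [h1] at hAi'
    obtain ⟨j, hR, hS⟩ := aux_mul_ne _ _ hAi'
    exact ⟨i, i', j, rfl, hpi', hR, hS⟩
  -- blockNonzero p q implies there are explicit witnesses
  have extract : ∀ p q, blockNonzero p q → ∃ (i i' : ιA) (j : ιB),
      πA i = p ∧ πA i' = p ∧ πB j = q ∧ R₀ i j ≠ 0 ∧ S j i' ≠ 0 := by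
    intro p q ⟨i, i', hi, hi', hsum⟩
    obtain ⟨j, hjmem, hj⟩ := Finset.exists_ne_zero_of_sum_ne_zero hsum
    obtain ⟨hR, hS⟩ := mul_ne_zero_iff.mp hj
    exact ⟨i, i', j, hi, hi', (Finset.mem_filter.mp hjmem).2, hR, hS⟩
  -- explicit witnesses give blockNonzero
  have build : ∀ {p q} {i i' : ιA} {j : ιB}, πA i = p → πA i' = p → πB j = q →
      R₀ i j ≠ 0 → S j i' ≠ 0 → blockNonzero p q := by
    intro p q i i' j hi hi' hj hR hS
    refine ⟨i, i', hi, hi', ?_⟩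
    have hpos : 0 < ∑ j' ∈ Finset.univ.filter (fun j' => πB j' = q), R₀ i j' * S j' i' :=
      Finset.sum_pos' (fun l _ => mul_nonneg (hRnn i l) (hSnn l i'))
        ⟨j, Finset.mem_filter.mpr ⟨Finset.mem_univ j, hj⟩,
          lt_of_le_of_ne (mul_nonneg (hRnn i j) (hSnn j i'))
            (Ne.symm (mul_ne_zero hR hS))⟩
    exact hpos.ne'
  constructor
  · intro p
    obtain ⟨i, i', j, hi, hi', hR, hS⟩ := witness p
    refine ⟨πB j, build hi hi' rfl hR hS, ?_⟩
    intro q' hq'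
    obtain ⟨i₂, i₂', j₂, hi₂, hi₂', hj₂, hR₂, hS₂⟩ := extract p q' hq'
    have hle1 : πB j₂ ≤ πB j := KL1 (hi₂'.trans hi.symm) hS₂ hR
    have hle2 : πB j ≤ πB j₂ := KL1 (hi'.trans hi₂.symm) hS hR₂
    rw [← hj₂]
    exact le_antisymm hle1 hle2
  · intro p q hb
    obtain ⟨i₀, i₀', j₀, hi₀, hi₀', hj₀, hR₀, hS₀⟩ := extract p q hb
    constructor
    · intro i i' hi hi'
      rw [h1, Matrix.mul_apply]
      rw [Finset.sum_filter_of_ne]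
      intro j _ hj
      obtain ⟨hR, hS⟩ := mul_ne_zero_iff.mp hj
      have hle1 : πB j ≤ πB j₀ := KL1 (hi'.trans hi₀.symm) hS hR₀
      have hle2 : πB j₀ ≤ πB j := KL1 (hi₀'.trans hi.symm) hS₀ hR
      rw [← hj₀]
      exact le_antisymm hle1 hle2
    · intro j j' hj hj'
      rw [h2, Matrix.mul_apply]
      rw [Finset.sum_filter_of_ne]
      intro i _ hterm
      obtain ⟨hS, hR⟩ := mul_ne_zero_iff.mp hterm
      have hle1 : πA i₀ ≤ πA i := KL2 (hj₀.trans hj.symm) hR₀ hS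
      have hle2 : πA i ≤ πA i₀' := KL2 (hj'.trans hj₀.symm) hR hS₀
      rw [← hi₀]
      exact le_antisymm (hle2.trans (hi₀'.trans hi₀.symm).le) hle1
end
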